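/- arXiv:1504.04217 — 2 statements merged into one kernel-verified Lean document; each statement's English description precedes it below -/
import Mathlib

section
/- For all probability distributions α₀, α₁ on A and β₀, β₁ on B, exactly one of the following two alternatives holds for the classical cheating probabilities: either (i) C_{A,0} = C_{A,1} = 1 and C_{B,0} < 1 and C_{B,1} < 1, or (ii) C_{B,0} = C_{B,1} = 1 and C_{A,0} < 1 and C_{A,1} < 1. In other words, in every classical BCCF-protocol exactly one party can entirely determine the outcome. -/
open Finset

namespace BCCF

variable {n : ℕ}

/-- Membership in Bob's cheating polytope `P_B`, encoded on full products:
`p j` plays the role of `p_{j+1}` and is required to depend only on the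
coordinates `x_1,…,x_{j+1}` and `y_1,…,y_{j+1}`. -/
def MemBob (A B : Fin n → Type) [∀ i, Fintype (A i)] [∀ i, Fintype (B i)]
    (p : Fin n → ((i : Fin n) → A i) → ((i : Fin n) → B i) → ℝ) : Prop :=
  (∀ j x y, 0 ≤ p j x y) ∧
  (∀ (j : Fin n) (x x' : (i : Fin n) → A i) (y y' : (i : Fin n) → B i),
      (∀ i, i ≤ j → x i = x' i) → (∀ i, i ≤ j → y i = y' i) → p j x y = p j x' y') ∧
  (∀ j : Fin n, (j : ℕ) = 0 → ∀ x y, ∑ b : B j, p j x (Function.update y j b) = 1) ∧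
  (∀ j k : Fin n, (j : ℕ) = (k : ℕ) + 1 → ∀ x y,
      ∑ b : B j, p j x (Function.update y j b) = p k x y)

/-- Membership in Alice's cheating polytope `P_A`, encoded on full products:
`s j` plays the role of `s_{j+1}` (depending on `x_1,…,x_{j+1}` and
`y_1,…,y_j`) and `sF` plays the role of the final function `s` on `{0,1}×A×B`. -/
def MemAlice (A B : Fin n → Type) [∀ i, Fintype (A i)] [∀ i, Fintype (B i)] (hn : 0 < n)
    (s : Fin n → ((i : Fin n) → A i) → ((i : Fin n) → B i) → ℝ)
    (sF : Bool → ((i : Fin n) → A i) → ((i : Fin n) → B i) → ℝ) : Prop :=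
  (∀ j x y, 0 ≤ s j x y) ∧
  (∀ a x y, 0 ≤ sF a x y) ∧
  (∀ (j : Fin n) (x x' : (i : Fin n) → A i) (y y' : (i : Fin n) → B i),
      (∀ i, i ≤ j → x i = x' i) → (∀ i, i < j → y i = y' i) → s j x y = s j x' y') ∧
  (∀ j : Fin n, (j : ℕ) = 0 → ∀ x y, ∑ a : A j, s j (Function.update x j a) y = 1) ∧
  (∀ j k : Fin n, (j : ℕ) = (k : ℕ) + 1 → ∀ x y,
      ∑ a : A j, s j (Function.update x j a) y = s k x y) ∧
  (∀ x y, sF false x y + sF true x y = s ⟨n - 1, Nat.sub_lt hn Nat.one_pos⟩ x y)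

/-- Fidelity of two nonnegative vectors. -/
noncomputable def fid {ι : Type} [Fintype ι] (u v : ι → ℝ) : ℝ :=
  (∑ i, Real.sqrt (u i * v i)) ^ 2

/-- `u` is a probability distribution. -/
def IsProbDist {ι : Type} [Fintype ι] (u : ι → ℝ) : Prop :=
  (∀ i, 0 ≤ u i) ∧ ∑ i, u i = 1

/-- Trace distance of two vectors. -/
noncomputable def tdist {ι : Type} [Fintype ι] (u v : ι → ℝ) : ℝ :=
  (1 / 2) * ∑ i, |u i - v i|

/-- Objective value of cheating Bob forcing outcome `c` in the quantum protocol. -/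
noncomputable def bobObjQ (A B : Fin n → Type) [∀ i, Fintype (A i)] [∀ i, Fintype (B i)]
    (hn : 0 < n) (α : Bool → ((i : Fin n) → A i) → ℝ)
    (β : Bool → ((i : Fin n) → B i) → ℝ) (c : Bool)
    (p : Fin n → ((i : Fin n) → A i) → ((i : Fin n) → B i) → ℝ) : ℝ :=
  (1 / 2) * ∑ a : Bool,
    fid (fun y => ∑ x, α a x * p ⟨n - 1, Nat.sub_lt hn Nat.one_pos⟩ x y) (β (Bool.xor a c))

/-- Objective value of cheating Alice forcing outcome `c` in the quantum protocol. -/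
noncomputable def aliceObjQ (A B : Fin n → Type) [∀ i, Fintype (A i)] [∀ i, Fintype (B i)]
    (α : Bool → ((i : Fin n) → A i) → ℝ)
    (β : Bool → ((i : Fin n) → B i) → ℝ) (c : Bool)
    (sF : Bool → ((i : Fin n) → A i) → ((i : Fin n) → B i) → ℝ) : ℝ :=
  (1 / 2) * ∑ a : Bool, ∑ y, β (Bool.xor a c) y * fid (fun x => sF a x y) (α a)

/-- Objective value of cheating Bob forcing outcome `c` in the classical protocol. -/
noncomputable def bobObjC (A B : Fin n → Type) [∀ i, Fintype (A i)] [∀ i, Fintype (B i)]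
    (hn : 0 < n) (α : Bool → ((i : Fin n) → A i) → ℝ)
    (β : Bool → ((i : Fin n) → B i) → ℝ) (c : Bool)
    (p : Fin n → ((i : Fin n) → A i) → ((i : Fin n) → B i) → ℝ) : ℝ :=
  (1 / 2) * ∑ a : Bool, ∑ y ∈ univ.filter (fun y => β (Bool.xor a c) y ≠ 0),
      ∑ x, α a x * p ⟨n - 1, Nat.sub_lt hn Nat.one_pos⟩ x y

/-- Objective value of cheating Alice forcing outcome `c` in the classical protocol. -/
noncomputable def aliceObjC (A B : Fin n → Type) [∀ i, Fintype (A i)] [∀ i, Fintype (B i)]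
    (α : Bool → ((i : Fin n) → A i) → ℝ)
    (β : Bool → ((i : Fin n) → B i) → ℝ) (c : Bool)
    (sF : Bool → ((i : Fin n) → A i) → ((i : Fin n) → B i) → ℝ) : ℝ :=
  (1 / 2) * ∑ a : Bool, ∑ y, β (Bool.xor a c) y *
      ∑ x ∈ univ.filter (fun x => α a x ≠ 0), sF a x y

/-- The set of values of cheating Bob's quantum strategies for outcome `c`. -/
def bobValsQ (A B : Fin n → Type) [∀ i, Fintype (A i)] [∀ i, Fintype (B i)]
    (hn : 0 < n) (α : Bool → ((i : Fin n) → A i) → ℝ)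
    (β : Bool → ((i : Fin n) → B i) → ℝ) (c : Bool) : Set ℝ :=
  {v | ∃ p, MemBob A B p ∧ v = bobObjQ A B hn α β c p}

/-- The set of values of cheating Alice's quantum strategies for outcome `c`. -/
def aliceValsQ (A B : Fin n → Type) [∀ i, Fintype (A i)] [∀ i, Fintype (B i)]
    (hn : 0 < n) (α : Bool → ((i : Fin n) → A i) → ℝ)
    (β : Bool → ((i : Fin n) → B i) → ℝ) (c : Bool) : Set ℝ :=
  {v | ∃ s sF, MemAlice A B hn s sF ∧ v = aliceObjQ A B α β c sF}

/-- The set of values of cheating Bob's classical strategies for outcome `c`. -/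
def bobValsC (A B : Fin n → Type) [∀ i, Fintype (A i)] [∀ i, Fintype (B i)]
    (hn : 0 < n) (α : Bool → ((i : Fin n) → A i) → ℝ)
    (β : Bool → ((i : Fin n) → B i) → ℝ) (c : Bool) : Set ℝ :=
  {v | ∃ p, MemBob A B p ∧ v = bobObjC A B hn α β c p}

/-- The set of values of cheating Alice's classical strategies for outcome `c`. -/
def aliceValsC (A B : Fin n → Type) [∀ i, Fintype (A i)] [∀ i, Fintype (B i)]
    (hn : 0 < n) (α : Bool → ((i : Fin n) → A i) → ℝ)
    (β : Bool → ((i : Fin n) → B i) → ℝ) (c : Bool) : Set ℝ :=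
  {v | ∃ s sF, MemAlice A B hn s sF ∧ v = aliceObjC A B α β c sF}

end BCCF

namespace BCCF

section Aux
variable {n : ℕ}



lemma sum_split {C : Fin n → Type} [∀ i, Fintype (C i)] (j : Fin n)
    (f : ((i : Fin n) → C i) → ℝ) :
    ∑ z : (i : Fin n) → C i, f z =
      ∑ c : C j, ∑ rest : (i : {i // i ≠ j}) → C i,
        f ((Equiv.piSplitAt j C).symm (c, rest)) := by
  rw [← Equiv.sum_comp (Equiv.piSplitAt j C).symm f, Fintype.sum_prod_type]

lemma split_update {C : Fin n → Type} (j : Fin n)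
    (c c' : C j) (rest : (i : {i // i ≠ j}) → C i) :
    (Equiv.piSplitAt j C).symm (c, rest) =
      Function.update ((Equiv.piSplitAt j C).symm (c', rest)) j c := by
  funext i
  simp [Equiv.piSplitAt_symm_apply, Function.update]
  split <;> rename_i h
  · subst h; simp
  · rfl

lemma chain_sum {C : Fin n → Type} [∀ i, Fintype (C i)] [∀ i, Nonempty (C i)]
    (hn : 0 < n) (q : Fin n → ((i : Fin n) → C i) → ℝ)
    (dep : ∀ (j : Fin n) z z', (∀ i, i ≤ j → z i = z' i) → q j z = q j z')
    (base : ∀ j : Fin n, (j : ℕ) = 0 → ∀ z, ∑ c : C j, q j (Function.update z j c) = 1)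
    (step : ∀ j k : Fin n, (j : ℕ) = (k : ℕ) + 1 → ∀ z,
      ∑ c : C j, q j (Function.update z j c) = q k z) :
    ∑ z : (i : Fin n) → C i, q ⟨n - 1, Nat.sub_lt hn Nat.one_pos⟩ z = 1 := by
  have key : ∀ (m : ℕ) (hm : m < n),
      ∑ z : (i : Fin n) → C i, q ⟨m, hm⟩ z =
        ∏ i ∈ univ.filter (fun i : Fin n => m < (i : ℕ)), (Fintype.card (C i) : ℝ) := by
    intro m
    induction m with
    | zero =>
      intro hm
      set j : Fin n := ⟨0, hm⟩ with hj
      rw [sum_split j, Finset.sum_comm]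
      have hinner : ∀ rest : (i : {i // i ≠ j}) → C i,
          ∑ c : C j, q j ((Equiv.piSplitAt j C).symm (c, rest)) = 1 := by
        intro rest
        have c0 : C j := Classical.arbitrary _
        have := base j rfl ((Equiv.piSplitAt j C).symm (c0, rest))
        rw [← this]
        refine Finset.sum_congr rfl fun c _ => ?_
        rw [split_update j c c0 rest]
      rw [Finset.sum_congr rfl fun rest _ => hinner rest]
      rw [Finset.sum_const, Finset.card_univ, nsmul_eq_mul, mul_one]
      rw [Fintype.card_pi, Nat.cast_prod]
      refine (Finset.prod_subtype (univ.filter (fun i : Fin n => 0 < (i : ℕ)))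
        (p := fun i : Fin n => i ≠ j) ?_ (fun i => (Fintype.card (C i) : ℝ))).symm
      intro i
      simp only [mem_filter, mem_univ, true_and]
      constructor
      · intro h h'; subst h'; simp [hj] at h
      · intro h
        rcases Nat.eq_zero_or_pos (i : ℕ) with h' | h'
        · exact absurd (Fin.ext h' : i = j) h
        · exact h'
    | succ m ih =>
      intro hm
      have hm' : m < n := Nat.lt_of_succ_lt hm
      set j : Fin n := ⟨m + 1, hm⟩ with hj
      set k : Fin n := ⟨m, hm'⟩ with hk
      have c0 : C j := Classical.arbitrary _
      have E1 : ∑ z : (i : Fin n) → C i, q j z =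
          ∑ rest : (i : {i // i ≠ j}) → C i, q k ((Equiv.piSplitAt j C).symm (c0, rest)) := by
        rw [sum_split j, Finset.sum_comm]
        refine Finset.sum_congr rfl fun rest _ => ?_
        have := step j k rfl ((Equiv.piSplitAt j C).symm (c0, rest))
        rw [← this]
        refine Finset.sum_congr rfl fun c _ => ?_
        rw [split_update j c c0 rest]
      have E2 : ∑ z : (i : Fin n) → C i, q k z =
          (Fintype.card (C j) : ℝ) *
            ∑ rest : (i : {i // i ≠ j}) → C i, q k ((Equiv.piSplitAt j C).symm (c0, rest)) := by
        rw [sum_split j]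
        rw [Finset.sum_congr rfl fun c _ => Finset.sum_congr rfl fun rest _ =>
          dep k ((Equiv.piSplitAt j C).symm (c, rest)) ((Equiv.piSplitAt j C).symm (c0, rest)) ?_]
        · rw [Finset.sum_const, Finset.card_univ, nsmul_eq_mul]
        · intro i hi
          rw [split_update j c c0 rest]
          have hik : (i : ℕ) ≤ m := Fin.le_def.mp hi
          have : i ≠ j := by
            intro h
            rw [h] at hik
            simp [hj] at hik
          rw [Function.update_of_ne this]
      have hsplit : univ.filter (fun i : Fin n => m < (i : ℕ)) =
          insert j (univ.filter (fun i : Fin n => m + 1 < (i : ℕ))) := by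
        ext i
        simp only [mem_filter, mem_univ, true_and, mem_insert]
        constructor
        · intro h
          by_cases h' : (i : ℕ) = m + 1
          · exact Or.inl (Fin.ext h')
          · exact Or.inr (by omega)
        · rintro (h | h)
          · subst h; simp [hj]
          · omega
      have hcard : (Fintype.card (C j) : ℝ) ≠ 0 := by
        exact_mod_cast Fintype.card_ne_zero
      have IH := ih hm'
      rw [hsplit, Finset.prod_insert (by simp [hj])] at IH
      rw [E2] at IH
      have := mul_left_cancel₀ hcard IH
      rw [E1, this]
  have := key (n - 1) (Nat.sub_lt hn Nat.one_pos)
  rw [this]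
  rw [Finset.filter_false_of_mem, Finset.prod_empty]
  intro i _
  simp only [not_lt]
  omega



def idx (hn : 0 < n) (r : ℕ) : Fin n := ⟨n - (r + 1), Nat.sub_lt hn r.succ_pos⟩

lemma idx_val (hn : 0 < n) (r : ℕ) : (idx hn r : ℕ) = n - (r + 1) := rfl

section Games

variable {A B : Fin n → Type}

/-- Alice can force leaf predicate `L` with `r` rounds remaining. -/
def AWr (hn : 0 < n) (L : ((i : Fin n) → A i) → ((i : Fin n) → B i) → Prop) :
    ℕ → ((i : Fin n) → A i) → ((i : Fin n) → B i) → Prop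
  | 0, x, y => L x y
  | r + 1, x, y => ∃ a : A (idx hn r), ∀ b : B (idx hn r),
      AWr hn L r (Function.update x (idx hn r) a) (Function.update y (idx hn r) b)

/-- Bob can force leaf predicate `L` with `r` rounds remaining. -/
def BWr (hn : 0 < n) (L : ((i : Fin n) → A i) → ((i : Fin n) → B i) → Prop) :
    ℕ → ((i : Fin n) → A i) → ((i : Fin n) → B i) → Prop
  | 0, x, y => L x y
  | r + 1, x, y => ∀ a : A (idx hn r), ∃ b : B (idx hn r),
      BWr hn L r (Function.update x (idx hn r) a) (Function.update y (idx hn r) b)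

variable {hn : 0 < n} {L L' : ((i : Fin n) → A i) → ((i : Fin n) → B i) → Prop}

lemma AWr_mono (h : ∀ x y, L x y → L' x y) :
    ∀ r x y, AWr hn L r x y → AWr hn L' r x y := by
  intro r
  induction r with
  | zero => exact h
  | succ r ih =>
    rintro x y ⟨a, ha⟩
    exact ⟨a, fun b => ih _ _ (ha b)⟩

lemma BWr_mono (h : ∀ x y, L x y → L' x y) :
    ∀ r x y, BWr hn L r x y → BWr hn L' r x y := by
  intro r
  induction r with
  | zero => exact h
  | succ r ih =>
    intro x y hB a
    obtain ⟨b, hb⟩ := hB a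
    exact ⟨b, ih _ _ hb⟩

lemma not_BWr : ∀ r x y, ¬ BWr hn L r x y → AWr hn (fun x y => ¬ L x y) r x y := by
  intro r
  induction r with
  | zero => exact fun x y h => h
  | succ r ih =>
    intro x y hB
    rw [BWr] at hB
    push_neg at hB
    obtain ⟨a, ha⟩ := hB
    exact ⟨a, fun b => ih _ _ (ha b)⟩

lemma not_AWr : ∀ r x y, ¬ AWr hn L r x y → BWr hn (fun x y => ¬ L x y) r x y := by
  intro r
  induction r with
  | zero => exact fun x y h => h
  | succ r ih =>
    intro x y hA
    rw [AWr] at hA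
    push_neg at hA
    intro a
    obtain ⟨b, hb⟩ := hA a
    exact ⟨b, ih _ _ hb⟩

/-- Agreement of two tuples below coordinate `k`. -/
def Agree (k : ℕ) {C : Fin n → Type} (z z' : (i : Fin n) → C i) : Prop :=
  ∀ i : Fin n, (i : ℕ) < k → z i = z' i

lemma agree_update {C : Fin n → Type} {r : ℕ} {z z' : (i : Fin n) → C i}
    (hag : Agree (n - (r + 1)) z z') (c : C (idx hn r)) (hc : z' (idx hn r) = c) :
    Agree (n - r) (Function.update z (idx hn r) c) z' := by
  intro i hi
  by_cases h : i = idx hn r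
  · subst h; rw [Function.update_self, hc]
  · rw [Function.update_of_ne h]
    refine hag i ?_
    have hv : (i : ℕ) ≠ n - (r + 1) := fun hh => h (Fin.ext hh)
    omega

lemma agree_mono_of_update {C : Fin n → Type} {r : ℕ} {z z' : (i : Fin n) → C i}
    (c : C (idx hn r)) (hag : Agree (n - r) (Function.update z (idx hn r) c) z') :
    Agree (n - (r + 1)) z z' := by
  intro i hi
  have h : i ≠ idx hn r := by
    intro hh
    rw [hh] at hi
    rw [idx_val] at hi
    omega
  have := hag i (by omega)
  rwa [Function.update_of_ne h] at this

def LBp (T0 T1 : ((i : Fin n) → A i) → Prop) (S0 S1 : ((i : Fin n) → B i) → Prop)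
    (x : (i : Fin n) → A i) (y : (i : Fin n) → B i) : Prop :=
  (T0 x → S0 y) ∧ (T1 x → S1 y)

def LAp (T0 T1 : ((i : Fin n) → A i) → Prop) (S0 S1 : ((i : Fin n) → B i) → Prop)
    (x : (i : Fin n) → A i) (y : (i : Fin n) → B i) : Prop :=
  (S0 y ∨ S1 y) → (S0 y ∧ T0 x) ∨ (S1 y ∧ T1 x)

variable {T0 T1 : ((i : Fin n) → A i) → Prop} {S0 S1 : ((i : Fin n) → B i) → Prop}

lemma L5 : ∀ r x y, BWr hn (LBp T0 T1 S0 S1) r x y →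
    ∀ x', T1 x' → Agree (n - r) x x' → ∃ y', S1 y' ∧ Agree (n - r) y y' := by
  intro r
  induction r with
  | zero =>
    intro x y hB x' hx' hag
    have hxx : x = x' := funext fun i => hag i i.isLt
    subst hxx
    exact ⟨y, hB.2 hx', fun i _ => rfl⟩
  | succ r ih =>
    intro x y hB x' hx' hag
    obtain ⟨b, hb⟩ := hB (x' (idx hn r))
    obtain ⟨y', hy', hagy⟩ := ih _ _ hb x' hx' (agree_update hag _ rfl)
    exact ⟨y', hy', agree_mono_of_update _ hagy⟩

lemma L6 : ∀ r x y, AWr hn (LAp T0 T1 S0 S1) r x y →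
    ∀ y', S1 y' → ¬ S0 y' → Agree (n - r) y y' → ∃ x', T1 x' ∧ Agree (n - r) x x' := by
  intro r
  induction r with
  | zero =>
    intro x y hA y' hy' hy0 hag
    have hyy : y = y' := funext fun i => hag i i.isLt
    subst hyy
    rcases hA (Or.inr hy') with ⟨h0, _⟩ | ⟨_, h1⟩
    · exact absurd h0 hy0
    · exact ⟨x, h1, fun i _ => rfl⟩
  | succ r ih =>
    intro x y hA y' hy' hy0 hag
    obtain ⟨a, ha⟩ := hA
    obtain ⟨x', hx', hagx⟩ := ih _ _ (ha (y' (idx hn r))) y' hy' hy0 (agree_update hag _ rfl)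
    exact ⟨x', hx', agree_mono_of_update _ hagx⟩

lemma LBp_swap : ∀ (x : (i : Fin n) → A i) (y : (i : Fin n) → B i),
    LBp T0 T1 S0 S1 x y → LBp T1 T0 S1 S0 x y := fun _ _ h => ⟨h.2, h.1⟩

lemma LAp_swap : ∀ (x : (i : Fin n) → A i) (y : (i : Fin n) → B i),
    LAp T0 T1 S0 S1 x y → LAp T1 T0 S1 S0 x y := fun _ _ h hor =>
  ((h hor.symm).symm : _)

lemma notLB_imp_LA : ∀ (x : (i : Fin n) → A i) (y : (i : Fin n) → B i),
    ¬ LBp T0 T1 S0 S1 x y → LAp T0 T1 S1 S0 x y := by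
  intro x y h
  unfold LBp at h
  unfold LAp
  tauto

lemma notLA_imp_LB : ∀ (x : (i : Fin n) → A i) (y : (i : Fin n) → B i),
    ¬ LAp T0 T1 S0 S1 x y → LBp T0 T1 S1 S0 x y := by
  intro x y h
  unfold LAp at h
  unfold LBp
  tauto

lemma L5' (r : ℕ) (x : (i : Fin n) → A i) (y : (i : Fin n) → B i)
    (hB : BWr hn (LBp T0 T1 S0 S1) r x y)
    (x' : (i : Fin n) → A i) (hx' : T0 x') (hag : Agree (n - r) x x') :
    ∃ y', S0 y' ∧ Agree (n - r) y y' :=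
  L5 r x y (BWr_mono LBp_swap r x y hB) x' hx' hag

lemma L6' (r : ℕ) (x : (i : Fin n) → A i) (y : (i : Fin n) → B i)
    (hA : AWr hn (LAp T0 T1 S0 S1) r x y)
    (y' : (i : Fin n) → B i) (hy' : S0 y') (hy1 : ¬ S1 y') (hag : Agree (n - r) y y') :
    ∃ x', T0 x' ∧ Agree (n - r) x x' :=
  L6 r x y (AWr_mono LAp_swap r x y hA) y' hy' hy1 hag

/-- The central lemma: with Bob's targets disjoint, Bob and Alice cannot both win. -/
lemma main_lemma (hdisj : ∀ y, S0 y → S1 y → False) :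
    ∀ r x y, (∃ y0, S0 y0 ∧ Agree (n - r) y y0) → (∃ y1, S1 y1 ∧ Agree (n - r) y y1) →
      BWr hn (LBp T0 T1 S0 S1) r x y → AWr hn (LAp T0 T1 S0 S1) r x y → False := by
  intro r
  induction r with
  | zero =>
    rintro x y ⟨y0, hS0, hag0⟩ ⟨y1, hS1, hag1⟩ _ _
    have h0 : y = y0 := funext fun i => hag0 i i.isLt
    have h1 : y = y1 := funext fun i => hag1 i i.isLt
    exact hdisj y (h0 ▸ hS0) (h1 ▸ hS1)
  | succ r ih =>
    rintro x y ⟨y0, hS0, hag0⟩ ⟨y1, hS1, hag1⟩ hB hA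
    obtain ⟨a, ha⟩ := hA
    obtain ⟨b, hb⟩ := hB a
    by_cases E0 : ∃ y0', S0 y0' ∧
        Agree (n - r) (Function.update y (idx hn r) b) y0'
    · by_cases E1 : ∃ y1', S1 y1' ∧
          Agree (n - r) (Function.update y (idx hn r) b) y1'
      · exact ih (Function.update x (idx hn r) a) (Function.update y (idx hn r) b) E0 E1 hb (ha b)
      · have NT1 : ∀ x'', T1 x'' →
            Agree (n - r) (Function.update x (idx hn r) a) x'' → False := fun x'' h hgx =>
          E1 (L5 r _ _ hb x'' h hgx)
        obtain ⟨x'', hx'', hagx⟩ := L6 r _ _ (ha (y1 (idx hn r))) y1 hS1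
          (fun hc => hdisj y1 hc hS1) (agree_update hag1 _ rfl)
        exact NT1 x'' hx'' hagx
    · have NT0 : ∀ x'', T0 x'' →
          Agree (n - r) (Function.update x (idx hn r) a) x'' → False := fun x'' h hgx =>
        E0 (L5' r _ _ hb x'' h hgx)
      obtain ⟨x'', hx'', hagx⟩ := L6' r _ _ (ha (y0 (idx hn r))) y0 hS0
        (fun hc => hdisj y0 hS0 hc) (agree_update hag0 _ rfl)
      exact NT0 x'' hx'' hagx

end Games

section Extract
variable {A B : Fin n → Type}
variable [∀ i, Nonempty (A i)] [∀ i, Nonempty (B i)]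

noncomputable def dflt (C : Fin n → Type) [∀ i, Nonempty (C i)] : (i : Fin n) → C i :=
  fun _ => Classical.arbitrary _

/-- Truncation: keep coordinates `< k`, default elsewhere. -/
noncomputable def trunc {C : Fin n → Type} [∀ i, Nonempty (C i)] (z : (i : Fin n) → C i)
    (k : ℕ) : (i : Fin n) → C i :=
  fun i => if (i : ℕ) < k then z i else dflt C i

lemma trunc_zero {C : Fin n → Type} [∀ i, Nonempty (C i)] (z : (i : Fin n) → C i) :
    trunc z 0 = dflt C := by
  funext i; simp [trunc]

lemma trunc_all {C : Fin n → Type} [∀ i, Nonempty (C i)] (z : (i : Fin n) → C i) :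
    trunc z n = z := by
  funext i; simp [trunc, i.isLt]

lemma trunc_succ {C : Fin n → Type} [∀ i, Nonempty (C i)] (z : (i : Fin n) → C i)
    (k : ℕ) (hk : k < n) :
    Function.update (trunc z k) ⟨k, hk⟩ (z ⟨k, hk⟩) = trunc z (k + 1) := by
  funext i
  by_cases h : i = (⟨k, hk⟩ : Fin n)
  · subst h; rw [Function.update_self]; simp [trunc]
  · rw [Function.update_of_ne h]
    have : (i : ℕ) ≠ k := fun hh => h (Fin.ext hh)
    simp only [trunc]
    by_cases h' : (i : ℕ) < k
    · rw [if_pos h', if_pos (by omega)]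
    · rw [if_neg h', if_neg (by omega)]

lemma trunc_cong {C : Fin n → Type} [∀ i, Nonempty (C i)] {z z' : (i : Fin n) → C i}
    {k m : ℕ} (hk : k ≤ m) (hag : Agree m z z') : trunc z k = trunc z' k := by
  funext i
  simp only [trunc]
  by_cases h : (i : ℕ) < k
  · rw [if_pos h, if_pos h, hag i (by omega)]
  · rw [if_neg h, if_neg h]

variable (hn : 0 < n) (L : ((i : Fin n) → A i) → ((i : Fin n) → B i) → Prop)

open Classical in
noncomputable def ypl (x : (i : Fin n) → A i) : ℕ → (i : Fin n) → B i
  | 0 => dflt B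
  | k + 1 =>
    if hk : k < n then
      (if h : ∃ b : B ⟨k, hk⟩, BWr hn L (n - (k + 1)) (trunc x (k + 1))
          (Function.update (ypl x k) ⟨k, hk⟩ b) then
        Function.update (ypl x k) ⟨k, hk⟩ h.choose
      else ypl x k)
    else ypl x k

lemma ypl_stable (x : (i : Fin n) → A i) :
    ∀ m k, k ≤ m → ∀ i : Fin n, (i : ℕ) < k → ypl hn L x m i = ypl hn L x k i := by
  intro m
  induction m with
  | zero =>
    intro k hk i hi
    have : k = 0 := by omega
    subst this; rfl
  | succ m ih =>
    intro k hk i hi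
    rcases Nat.eq_or_lt_of_le hk with h | h
    · subst h; rfl
    · have hk' : k ≤ m := by omega
      have key : ypl hn L x (m + 1) i = ypl hn L x m i := by
        simp only [ypl]
        split
        · split
          · rw [Function.update_of_ne ?_]
            intro hh
            have := congrArg Fin.val hh
            simp only [Fin.val_mk] at this
            omega
          · rfl
        · rfl
      rw [key]
      exact ih k hk' i hi

lemma ypl_cong (x x' : (i : Fin n) → A i) :
    ∀ m k, m ≤ k → Agree k x x' → ypl hn L x m = ypl hn L x' m := by
  intro m
  induction m with
  | zero => intro k _ _; rfl
  | succ m ih =>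
    intro k hm hag
    have h1 : ypl hn L x m = ypl hn L x' m := ih k (by omega) hag
    have h2 : trunc x (m + 1) = trunc x' (m + 1) := trunc_cong (by omega) hag
    show ypl hn L x (m + 1) = ypl hn L x' (m + 1)
    simp only [ypl]
    rw [h1, h2]

lemma ypl_invariant (x : (i : Fin n) → A i) (hB : BWr hn L n (dflt A) (dflt B)) :
    ∀ k, k ≤ n → BWr hn L (n - k) (trunc x k) (ypl hn L x k) := by
  intro k
  induction k with
  | zero =>
    intro _
    rw [Nat.sub_zero, trunc_zero x]
    show BWr hn L n (dflt A) (dflt B)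
    exact hB
  | succ k ih =>
    intro hk1
    have hk : k < n := hk1
    have inv := ih (by omega)
    rw [show n - k = (n - (k + 1)) + 1 from by omega] at inv
    rw [BWr] at inv
    have hidx : idx hn (n - (k + 1)) = (⟨k, hk⟩ : Fin n) := by
      apply Fin.ext
      simp only [idx]
      omega
    rw [hidx] at inv
    have hex := inv (x ⟨k, hk⟩)
    rw [trunc_succ x k hk] at hex
    have hex' : ∃ b : B ⟨k, hk⟩, BWr hn L (n - (k + 1)) (trunc x (k + 1))
        (Function.update (ypl hn L x k) ⟨k, hk⟩ b) := hex
    have hres : ypl hn L x (k + 1) =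
        Function.update (ypl hn L x k) ⟨k, hk⟩ hex'.choose := by
      simp only [ypl]
      rw [dif_pos hk, dif_pos hex']
    rw [hres]
    exact hex'.choose_spec

/-- Extraction of Bob's deterministic strategy from a winning game position. -/
lemma extractB (hB : BWr hn L n (dflt A) (dflt B)) :
    ∃ Y : ((i : Fin n) → A i) → ((i : Fin n) → B i),
      (∀ x x' (i : Fin n), (∀ i' : Fin n, i' ≤ i → x i' = x' i') → Y x i = Y x' i) ∧
      ∀ x, L x (Y x) := by
  refine ⟨fun x => ypl hn L x n, ?_, ?_⟩
  · intro x x' i hag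
    have h1 : ypl hn L x n i = ypl hn L x ((i : ℕ) + 1) i :=
      ypl_stable hn L x n ((i : ℕ) + 1) i.isLt i (by omega)
    have h2 : ypl hn L x' n i = ypl hn L x' ((i : ℕ) + 1) i :=
      ypl_stable hn L x' n ((i : ℕ) + 1) i.isLt i (by omega)
    have h3 : ypl hn L x ((i : ℕ) + 1) = ypl hn L x' ((i : ℕ) + 1) := by
      refine ypl_cong hn L x x' _ ((i : ℕ) + 1) le_rfl ?_
      intro i' hi'
      exact hag i' (Fin.le_def.mpr (by omega))
    show ypl hn L x n i = ypl hn L x' n i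
    rw [h1, h3, ← h2]
  · intro x
    have := ypl_invariant hn L x hB n le_rfl
    rw [Nat.sub_self, trunc_all] at this
    exact this


open Classical in
noncomputable def xpl (y : (i : Fin n) → B i) : ℕ → (i : Fin n) → A i
  | 0 => dflt A
  | k + 1 =>
    if hk : k < n then
      (if h : ∃ a : A ⟨k, hk⟩, ∀ b : B ⟨k, hk⟩, AWr hn L (n - (k + 1))
          (Function.update (xpl y k) ⟨k, hk⟩ a)
          (Function.update (trunc y k) ⟨k, hk⟩ b) then
        Function.update (xpl y k) ⟨k, hk⟩ h.choose
      else xpl y k)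
    else xpl y k

lemma xpl_stable (y : (i : Fin n) → B i) :
    ∀ m k, k ≤ m → ∀ i : Fin n, (i : ℕ) < k → xpl hn L y m i = xpl hn L y k i := by
  intro m
  induction m with
  | zero =>
    intro k hk i hi
    have : k = 0 := by omega
    subst this; rfl
  | succ m ih =>
    intro k hk i hi
    rcases Nat.eq_or_lt_of_le hk with h | h
    · subst h; rfl
    · have hk' : k ≤ m := by omega
      have key : xpl hn L y (m + 1) i = xpl hn L y m i := by
        simp only [xpl]
        split
        · split
          · rw [Function.update_of_ne ?_]
            intro hh
            have := congrArg Fin.val hh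
            simp only [Fin.val_mk] at this
            omega
          · rfl
        · rfl
      rw [key]
      exact ih k hk' i hi

lemma xpl_cong (y y' : (i : Fin n) → B i) :
    ∀ m k, m ≤ k + 1 → Agree k y y' → xpl hn L y m = xpl hn L y' m := by
  intro m
  induction m with
  | zero => intro k _ _; rfl
  | succ m ih =>
    intro k hm hag
    have h1 : xpl hn L y m = xpl hn L y' m := ih k (by omega) hag
    have h2 : trunc y m = trunc y' m := trunc_cong (by omega) hag
    show xpl hn L y (m + 1) = xpl hn L y' (m + 1)
    simp only [xpl]
    rw [h1, h2]

lemma xpl_invariant (y : (i : Fin n) → B i) (hA : AWr hn L n (dflt A) (dflt B)) :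
    ∀ k, k ≤ n → AWr hn L (n - k) (xpl hn L y k) (trunc y k) := by
  intro k
  induction k with
  | zero =>
    intro _
    rw [Nat.sub_zero, trunc_zero y]
    show AWr hn L n (dflt A) (dflt B)
    exact hA
  | succ k ih =>
    intro hk1
    have hk : k < n := hk1
    have inv := ih (by omega)
    rw [show n - k = (n - (k + 1)) + 1 from by omega] at inv
    rw [AWr] at inv
    have hidx : idx hn (n - (k + 1)) = (⟨k, hk⟩ : Fin n) := by
      apply Fin.ext
      simp only [idx]
      omega
    rw [hidx] at inv
    have hex' : ∃ a : A ⟨k, hk⟩, ∀ b : B ⟨k, hk⟩, AWr hn L (n - (k + 1))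
        (Function.update (xpl hn L y k) ⟨k, hk⟩ a)
        (Function.update (trunc y k) ⟨k, hk⟩ b) := inv
    have hres : xpl hn L y (k + 1) =
        Function.update (xpl hn L y k) ⟨k, hk⟩ hex'.choose := by
      simp only [xpl]
      rw [dif_pos hk, dif_pos hex']
    rw [hres]
    have := hex'.choose_spec (y ⟨k, hk⟩)
    rwa [trunc_succ y k hk] at this

lemma extractA (hA : AWr hn L n (dflt A) (dflt B)) :
    ∃ X : ((i : Fin n) → B i) → ((i : Fin n) → A i),
      (∀ y y' (i : Fin n), (∀ i' : Fin n, i' < i → y i' = y' i') → X y i = X y' i) ∧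
      ∀ y, L (X y) y := by
  refine ⟨fun y => xpl hn L y n, ?_, ?_⟩
  · intro y y' i hag
    have h1 : xpl hn L y n i = xpl hn L y ((i : ℕ) + 1) i :=
      xpl_stable hn L y n ((i : ℕ) + 1) i.isLt i (by omega)
    have h2 : xpl hn L y' n i = xpl hn L y' ((i : ℕ) + 1) i :=
      xpl_stable hn L y' n ((i : ℕ) + 1) i.isLt i (by omega)
    have h3 : xpl hn L y ((i : ℕ) + 1) = xpl hn L y' ((i : ℕ) + 1) := by
      refine xpl_cong hn L y y' _ (i : ℕ) le_rfl ?_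
      intro i' hi'
      exact hag i' (Fin.lt_def.mpr (by omega))
    show xpl hn L y n i = xpl hn L y' n i
    rw [h1, h3, ← h2]
  · intro y
    have := xpl_invariant hn L y hA n le_rfl
    rw [Nat.sub_self, trunc_all] at this
    exact this

end Extract

end Aux


section Protocol
variable {n : ℕ} {A B : Fin n → Type} [∀ i, Fintype (A i)] [∀ i, Nonempty (A i)]
  [∀ i, Fintype (B i)] [∀ i, Nonempty (B i)]

lemma memBob_sum (hn : 0 < n) {p : Fin n → ((i : Fin n) → A i) → ((i : Fin n) → B i) → ℝ}
    (hp : MemBob A B p) (x : (i : Fin n) → A i) :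
    ∑ y : (i : Fin n) → B i, p ⟨n - 1, Nat.sub_lt hn Nat.one_pos⟩ x y = 1 :=
  chain_sum hn (fun j y => p j x y)
    (fun j z z' h => hp.2.1 j x x z z' (fun _ _ => rfl) h)
    (fun j hj z => hp.2.2.1 j hj x z)
    (fun j k hjk z => hp.2.2.2 j k hjk x z)

lemma memAlice_sum (hn : 0 < n)
    {s : Fin n → ((i : Fin n) → A i) → ((i : Fin n) → B i) → ℝ}
    {sF : Bool → ((i : Fin n) → A i) → ((i : Fin n) → B i) → ℝ}
    (hs : MemAlice A B hn s sF) (y : (i : Fin n) → B i) :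
    ∑ x : (i : Fin n) → A i, s ⟨n - 1, Nat.sub_lt hn Nat.one_pos⟩ x y = 1 :=
  chain_sum hn (fun j x => s j x y)
    (fun j z z' h => hs.2.2.1 j z z' y y h (fun _ _ => rfl))
    (fun j hj z => hs.2.2.2.1 j hj z y)
    (fun j k hjk z => hs.2.2.2.2.1 j k hjk z y)

variable (hn : 0 < n) (α : Bool → ((i : Fin n) → A i) → ℝ)
  (β : Bool → ((i : Fin n) → B i) → ℝ) (c : Bool)

lemma bobObjC_eq {p : Fin n → ((i : Fin n) → A i) → ((i : Fin n) → B i) → ℝ} :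
    bobObjC A B hn α β c p = (1 / 2) * ∑ a : Bool, ∑ x : (i : Fin n) → A i, α a x *
      ∑ y ∈ univ.filter (fun y => β (Bool.xor a c) y ≠ 0),
        p ⟨n - 1, Nat.sub_lt hn Nat.one_pos⟩ x y := by
  unfold bobObjC
  congr 1
  refine Finset.sum_congr rfl fun a _ => ?_
  rw [Finset.sum_comm]
  exact Finset.sum_congr rfl fun x _ => by rw [Finset.mul_sum]

lemma bob_u_le_one {p : Fin n → ((i : Fin n) → A i) → ((i : Fin n) → B i) → ℝ}
    (hp : MemBob A B p) (a : Bool) (x : (i : Fin n) → A i) :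
    ∑ y ∈ univ.filter (fun y => β (Bool.xor a c) y ≠ 0),
      p ⟨n - 1, Nat.sub_lt hn Nat.one_pos⟩ x y ≤ 1 := by
  calc ∑ y ∈ univ.filter (fun y => β (Bool.xor a c) y ≠ 0),
        p ⟨n - 1, Nat.sub_lt hn Nat.one_pos⟩ x y
      ≤ ∑ y : (i : Fin n) → B i, p ⟨n - 1, Nat.sub_lt hn Nat.one_pos⟩ x y :=
        Finset.sum_le_sum_of_subset_of_nonneg (Finset.filter_subset _ _)
          (fun _ _ _ => hp.1 _ _ _)
    _ = 1 := memBob_sum hn hp x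

lemma bob_u_nonneg {p : Fin n → ((i : Fin n) → A i) → ((i : Fin n) → B i) → ℝ}
    (hp : MemBob A B p) (a : Bool) (x : (i : Fin n) → A i) :
    0 ≤ ∑ y ∈ univ.filter (fun y => β (Bool.xor a c) y ≠ 0),
      p ⟨n - 1, Nat.sub_lt hn Nat.one_pos⟩ x y :=
  Finset.sum_nonneg fun _ _ => hp.1 _ _ _

lemma sum_bool_two (f : Bool → ℝ) (a : Bool) : ∑ b : Bool, f b = f a + f !a := by
  cases a <;> simp [Fintype.sum_bool] <;> ring

lemma objB_le (hα : ∀ a, IsProbDist (α a))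
    {p : Fin n → ((i : Fin n) → A i) → ((i : Fin n) → B i) → ℝ} (hp : MemBob A B p) :
    bobObjC A B hn α β c p ≤ 1 := by
  rw [bobObjC_eq]
  have h1 : ∀ a : Bool, ∑ x : (i : Fin n) → A i, α a x *
      (∑ y ∈ univ.filter (fun y => β (Bool.xor a c) y ≠ 0),
        p ⟨n - 1, Nat.sub_lt hn Nat.one_pos⟩ x y) ≤ 1 := by
    intro a
    calc ∑ x : (i : Fin n) → A i, α a x *
        (∑ y ∈ univ.filter (fun y => β (Bool.xor a c) y ≠ 0),
          p ⟨n - 1, Nat.sub_lt hn Nat.one_pos⟩ x y)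
        ≤ ∑ x : (i : Fin n) → A i, α a x :=
          Finset.sum_le_sum fun x _ =>
            mul_le_of_le_one_right ((hα a).1 x) (bob_u_le_one hn β c hp a x)
      _ = 1 := (hα a).2
  rw [Fintype.sum_bool]
  have ht := h1 true
  have hf := h1 false
  linarith

lemma objB_lt (hα : ∀ a, IsProbDist (α a))
    {p : Fin n → ((i : Fin n) → A i) → ((i : Fin n) → B i) → ℝ} (hp : MemBob A B p)
    (astar : Bool) (xstar : (i : Fin n) → A i) (ystar : (i : Fin n) → B i)
    (hx : α astar xstar ≠ 0) (hy : β (Bool.xor astar c) ystar = 0)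
    (hq : 0 < p ⟨n - 1, Nat.sub_lt hn Nat.one_pos⟩ xstar ystar) :
    bobObjC A B hn α β c p < 1 := by
  classical
  rw [bobObjC_eq]
  set L : Fin n := ⟨n - 1, Nat.sub_lt hn Nat.one_pos⟩ with hL
  have hustar : ∑ y ∈ univ.filter (fun y => β (Bool.xor astar c) y ≠ 0),
      p L xstar y < 1 := by
    have hmem : ystar ∉ univ.filter (fun y => β (Bool.xor astar c) y ≠ 0) := by
      simp [hy]
    have hsub : insert ystar (univ.filter (fun y => β (Bool.xor astar c) y ≠ 0)) ⊆ univ :=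
      fun _ _ => Finset.mem_univ _
    have h2 : ∑ y ∈ insert ystar (univ.filter (fun y => β (Bool.xor astar c) y ≠ 0)),
        p L xstar y ≤ 1 := by
      rw [← memBob_sum hn hp xstar]
      exact Finset.sum_le_sum_of_subset_of_nonneg hsub (fun _ _ _ => hp.1 _ _ _)
    rw [Finset.sum_insert hmem] at h2
    linarith
  have hxpos : 0 < α astar xstar := lt_of_le_of_ne ((hα astar).1 xstar) (Ne.symm hx)
  have hstrict : ∑ x : (i : Fin n) → A i, α astar x *
      (∑ y ∈ univ.filter (fun y => β (Bool.xor astar c) y ≠ 0), p L x y) < 1 := by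
    have := Finset.sum_lt_sum (s := (univ : Finset ((i : Fin n) → A i)))
      (f := fun x => α astar x *
        (∑ y ∈ univ.filter (fun y => β (Bool.xor astar c) y ≠ 0), p L x y))
      (g := fun x => α astar x)
      (fun x _ => mul_le_of_le_one_right ((hα astar).1 x) (bob_u_le_one hn β c hp astar x))
      ⟨xstar, Finset.mem_univ _, by
        have := mul_lt_mul_of_pos_left hustar hxpos
        simpa using this⟩
    calc _ < ∑ x : (i : Fin n) → A i, α astar x := this
      _ = 1 := (hα astar).2
  have hother : ∑ x : (i : Fin n) → A i, α (!astar) x *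
      (∑ y ∈ univ.filter (fun y => β (Bool.xor (!astar) c) y ≠ 0), p L x y) ≤ 1 := by
    calc _ ≤ ∑ x : (i : Fin n) → A i, α (!astar) x :=
          Finset.sum_le_sum fun x _ =>
            mul_le_of_le_one_right ((hα (!astar)).1 x) (bob_u_le_one hn β c hp (!astar) x)
      _ = 1 := (hα (!astar)).2
  rw [sum_bool_two _ astar]
  linarith

lemma aliceObjC_w_le_one
    {s : Fin n → ((i : Fin n) → A i) → ((i : Fin n) → B i) → ℝ}
    {sF : Bool → ((i : Fin n) → A i) → ((i : Fin n) → B i) → ℝ}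
    (hs : MemAlice A B hn s sF) (a : Bool) (y : (i : Fin n) → B i) :
    ∑ x ∈ univ.filter (fun x => α a x ≠ 0), sF a x y ≤ 1 := by
  calc ∑ x ∈ univ.filter (fun x => α a x ≠ 0), sF a x y
      ≤ ∑ x : (i : Fin n) → A i, sF a x y :=
        Finset.sum_le_sum_of_subset_of_nonneg (Finset.filter_subset _ _)
          (fun _ _ _ => hs.2.1 _ _ _)
    _ ≤ ∑ x : (i : Fin n) → A i, s ⟨n - 1, Nat.sub_lt hn Nat.one_pos⟩ x y := by
        refine Finset.sum_le_sum fun x _ => ?_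
        rw [← hs.2.2.2.2.2 x y]
        cases a
        · have := hs.2.1 true x y; linarith
        · have := hs.2.1 false x y; linarith
    _ = 1 := memAlice_sum hn hs y

lemma objA_le (hβ : ∀ b, IsProbDist (β b))
    {s : Fin n → ((i : Fin n) → A i) → ((i : Fin n) → B i) → ℝ}
    {sF : Bool → ((i : Fin n) → A i) → ((i : Fin n) → B i) → ℝ}
    (hs : MemAlice A B hn s sF) :
    aliceObjC A B α β c sF ≤ 1 := by
  unfold aliceObjC
  have h1 : ∀ a : Bool, ∑ y : (i : Fin n) → B i, β (Bool.xor a c) y *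
      ∑ x ∈ univ.filter (fun x => α a x ≠ 0), sF a x y ≤ 1 := by
    intro a
    calc ∑ y : (i : Fin n) → B i, β (Bool.xor a c) y *
        ∑ x ∈ univ.filter (fun x => α a x ≠ 0), sF a x y
        ≤ ∑ y : (i : Fin n) → B i, β (Bool.xor a c) y :=
          Finset.sum_le_sum fun y _ =>
            mul_le_of_le_one_right ((hβ (Bool.xor a c)).1 y) (aliceObjC_w_le_one hn α hs a y)
      _ = 1 := (hβ (Bool.xor a c)).2
  rw [Fintype.sum_bool]
  have ht := h1 true
  have hf := h1 false
  linarith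

lemma aliceObjC_w_nonneg
    {s : Fin n → ((i : Fin n) → A i) → ((i : Fin n) → B i) → ℝ}
    {sF : Bool → ((i : Fin n) → A i) → ((i : Fin n) → B i) → ℝ}
    (hs : MemAlice A B hn s sF) (a : Bool) (y : (i : Fin n) → B i) :
    0 ≤ ∑ x ∈ univ.filter (fun x => α a x ≠ 0), sF a x y :=
  Finset.sum_nonneg fun _ _ => hs.2.1 _ _ _

lemma aliceObjC_w_pair
    {s : Fin n → ((i : Fin n) → A i) → ((i : Fin n) → B i) → ℝ}
    {sF : Bool → ((i : Fin n) → A i) → ((i : Fin n) → B i) → ℝ}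
    (hs : MemAlice A B hn s sF) (y : (i : Fin n) → B i) :
    (∑ x ∈ univ.filter (fun x => α false x ≠ 0), sF false x y) +
      (∑ x ∈ univ.filter (fun x => α true x ≠ 0), sF true x y) ≤ 1 := by
  have h0 : ∑ x ∈ univ.filter (fun x => α false x ≠ 0), sF false x y ≤
      ∑ x : (i : Fin n) → A i, sF false x y :=
    Finset.sum_le_sum_of_subset_of_nonneg (Finset.filter_subset _ _)
      (fun _ _ _ => hs.2.1 _ _ _)
  have h1 : ∑ x ∈ univ.filter (fun x => α true x ≠ 0), sF true x y ≤
      ∑ x : (i : Fin n) → A i, sF true x y :=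
    Finset.sum_le_sum_of_subset_of_nonneg (Finset.filter_subset _ _)
      (fun _ _ _ => hs.2.1 _ _ _)
  have h2 : (∑ x : (i : Fin n) → A i, sF false x y) + ∑ x : (i : Fin n) → A i, sF true x y
      = 1 := by
    rw [← Finset.sum_add_distrib]
    rw [Finset.sum_congr rfl fun x _ => hs.2.2.2.2.2 x y]
    exact memAlice_sum hn hs y
  linarith

lemma aliceObjC_w_deficit
    {s : Fin n → ((i : Fin n) → A i) → ((i : Fin n) → B i) → ℝ}
    {sF : Bool → ((i : Fin n) → A i) → ((i : Fin n) → B i) → ℝ}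
    (hs : MemAlice A B hn s sF) (a : Bool) (y : (i : Fin n) → B i)
    (xstar : (i : Fin n) → A i) (hx : α a xstar = 0) :
    ∑ x ∈ univ.filter (fun x => α a x ≠ 0), sF a x y ≤
      1 - s ⟨n - 1, Nat.sub_lt hn Nat.one_pos⟩ xstar y := by
  classical
  set L : Fin n := ⟨n - 1, Nat.sub_lt hn Nat.one_pos⟩ with hL
  have hsF_le : ∀ x, sF a x y ≤ s L x y := by
    intro x
    rw [← hs.2.2.2.2.2 x y]
    cases a
    · have := hs.2.1 true x y; linarith
    · have := hs.2.1 false x y; linarith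
  have hmem : xstar ∉ univ.filter (fun x => α a x ≠ 0) := by simp [hx]
  have h1 : ∑ x ∈ univ.filter (fun x => α a x ≠ 0), sF a x y ≤
      ∑ x ∈ univ.filter (fun x => α a x ≠ 0), s L x y :=
    Finset.sum_le_sum fun x _ => hsF_le x
  have h2 : ∑ x ∈ insert xstar (univ.filter (fun x => α a x ≠ 0)), s L x y ≤ 1 := by
    rw [← memAlice_sum hn hs y]
    exact Finset.sum_le_sum_of_subset_of_nonneg (fun _ _ => Finset.mem_univ _)
      (fun _ _ _ => hs.1 _ _ _)
  rw [Finset.sum_insert hmem] at h2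
  linarith

lemma objA_comp_le (hβ : ∀ b, IsProbDist (β b))
    {s : Fin n → ((i : Fin n) → A i) → ((i : Fin n) → B i) → ℝ}
    {sF : Bool → ((i : Fin n) → A i) → ((i : Fin n) → B i) → ℝ}
    (hs : MemAlice A B hn s sF) (a : Bool) :
    ∑ y : (i : Fin n) → B i, β (Bool.xor a c) y *
      ∑ x ∈ univ.filter (fun x => α a x ≠ 0), sF a x y ≤ 1 :=
  calc ∑ y : (i : Fin n) → B i, β (Bool.xor a c) y *
      ∑ x ∈ univ.filter (fun x => α a x ≠ 0), sF a x y
      ≤ ∑ y : (i : Fin n) → B i, β (Bool.xor a c) y :=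
        Finset.sum_le_sum fun y _ =>
          mul_le_of_le_one_right ((hβ (Bool.xor a c)).1 y) (aliceObjC_w_le_one hn α hs a y)
    _ = 1 := (hβ (Bool.xor a c)).2

lemma objA_comp_lt (hβ : ∀ b, IsProbDist (β b))
    {s : Fin n → ((i : Fin n) → A i) → ((i : Fin n) → B i) → ℝ}
    {sF : Bool → ((i : Fin n) → A i) → ((i : Fin n) → B i) → ℝ}
    (hs : MemAlice A B hn s sF) (a : Bool) (ystar : (i : Fin n) → B i)
    (hb : β (Bool.xor a c) ystar ≠ 0)
    (hw : ∑ x ∈ univ.filter (fun x => α a x ≠ 0), sF a x ystar < 1) :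
    ∑ y : (i : Fin n) → B i, β (Bool.xor a c) y *
      ∑ x ∈ univ.filter (fun x => α a x ≠ 0), sF a x y < 1 := by
  have hbpos : 0 < β (Bool.xor a c) ystar :=
    lt_of_le_of_ne ((hβ (Bool.xor a c)).1 ystar) (Ne.symm hb)
  calc ∑ y : (i : Fin n) → B i, β (Bool.xor a c) y *
      ∑ x ∈ univ.filter (fun x => α a x ≠ 0), sF a x y
      < ∑ y : (i : Fin n) → B i, β (Bool.xor a c) y := by
        refine Finset.sum_lt_sum
          (fun y _ => mul_le_of_le_one_right ((hβ (Bool.xor a c)).1 y)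
            (aliceObjC_w_le_one hn α hs a y))
          ⟨ystar, Finset.mem_univ _, ?_⟩
        have := mul_lt_mul_of_pos_left hw hbpos
        simpa using this
    _ = 1 := (hβ (Bool.xor a c)).2

lemma objA_lt_of_comp (hβ : ∀ b, IsProbDist (β b))
    {s : Fin n → ((i : Fin n) → A i) → ((i : Fin n) → B i) → ℝ}
    {sF : Bool → ((i : Fin n) → A i) → ((i : Fin n) → B i) → ℝ}
    (hs : MemAlice A B hn s sF) (a : Bool)
    (hlt : ∑ y : (i : Fin n) → B i, β (Bool.xor a c) y *
      ∑ x ∈ univ.filter (fun x => α a x ≠ 0), sF a x y < 1) :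
    aliceObjC A B α β c sF < 1 := by
  unfold aliceObjC
  rw [sum_bool_two _ a]
  have hother := objA_comp_le hn α β c hβ hs (!a)
  linarith

lemma objA_lt_overlap (hβ : ∀ b, IsProbDist (β b))
    {s : Fin n → ((i : Fin n) → A i) → ((i : Fin n) → B i) → ℝ}
    {sF : Bool → ((i : Fin n) → A i) → ((i : Fin n) → B i) → ℝ}
    (hs : MemAlice A B hn s sF) (y0 : (i : Fin n) → B i)
    (hb0 : β false y0 ≠ 0) (hb1 : β true y0 ≠ 0) :
    aliceObjC A B α β c sF < 1 := by
  have hbx : ∀ a : Bool, β (Bool.xor a c) y0 ≠ 0 := by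
    intro a; cases a <;> cases c <;> simpa
  by_cases hw1 : ∑ x ∈ univ.filter (fun x => α true x ≠ 0), sF true x y0 < 1
  · exact objA_lt_of_comp hn α β c hβ hs true
      (objA_comp_lt hn α β c hβ hs true y0 (hbx true) hw1)
  · have hpair := aliceObjC_w_pair hn α hs y0
    have hw0 : ∑ x ∈ univ.filter (fun x => α false x ≠ 0), sF false x y0 < 1 := by
      push_neg at hw1
      linarith
    exact objA_lt_of_comp hn α β c hβ hs false
      (objA_comp_lt hn α β c hβ hs false y0 (hbx false) hw0)

lemma playB {p : Fin n → ((i : Fin n) → A i) → ((i : Fin n) → B i) → ℝ}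
    (hp : MemBob A B p)
    {M : ((i : Fin n) → A i) → ((i : Fin n) → B i) → Prop}
    (hM : AWr hn M n (dflt A) (dflt B)) :
    ∃ x y, M x y ∧ 0 < p ⟨n - 1, Nat.sub_lt hn Nat.one_pos⟩ x y := by
  suffices h : ∀ r, r ≤ n → ∀ x y, AWr hn M r x y → (r < n → 0 < p (idx hn r) x y) →
      ∃ x' y', M x' y' ∧ 0 < p ⟨n - 1, Nat.sub_lt hn Nat.one_pos⟩ x' y' by
    exact h n le_rfl _ _ hM (fun hlt => absurd hlt (lt_irrefl n))
  intro r
  induction r with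
  | zero =>
    intro _ x y hA hw
    exact ⟨x, y, hA, hw hn⟩
  | succ r ih =>
    intro hr x y hA hw
    obtain ⟨a, ha⟩ := hA
    have hsum : 0 < ∑ b : B (idx hn r),
        p (idx hn r) (Function.update x (idx hn r) a) (Function.update y (idx hn r) b) := by
      rcases Nat.eq_or_lt_of_le hr with hcase | hcase
      · have hidx0 : ((idx hn r : Fin n) : ℕ) = 0 := by rw [idx_val]; omega
        rw [hp.2.2.1 (idx hn r) hidx0 _ y]; norm_num
      · have hstep : ((idx hn r : Fin n) : ℕ) = ((idx hn (r + 1) : Fin n) : ℕ) + 1 := by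
          rw [idx_val, idx_val]; omega
        rw [hp.2.2.2 (idx hn r) (idx hn (r + 1)) hstep _ y]
        have hdep : p (idx hn (r + 1)) (Function.update x (idx hn r) a) y =
            p (idx hn (r + 1)) x y := by
          refine hp.2.1 _ _ _ _ _ (fun i hi => ?_) (fun _ _ => rfl)
          refine Function.update_of_ne ?_ _ _
          intro hh
          rw [hh] at hi
          have := Fin.le_def.mp hi
          rw [idx_val, idx_val] at this
          omega
        rw [hdep]
        exact hw hcase
    have hex : ∃ b, 0 < p (idx hn r) (Function.update x (idx hn r) a)
        (Function.update y (idx hn r) b) := by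
      by_contra hcon
      push_neg at hcon
      have : ∑ b : B (idx hn r),
          p (idx hn r) (Function.update x (idx hn r) a) (Function.update y (idx hn r) b)
          ≤ 0 := Finset.sum_nonpos fun b _ => hcon b
      linarith
    obtain ⟨b, hb⟩ := hex
    exact ih (by omega) _ _ (ha b) (fun _ => hb)

lemma playA {s : Fin n → ((i : Fin n) → A i) → ((i : Fin n) → B i) → ℝ}
    {sF : Bool → ((i : Fin n) → A i) → ((i : Fin n) → B i) → ℝ}
    (hs : MemAlice A B hn s sF)
    {M : ((i : Fin n) → A i) → ((i : Fin n) → B i) → Prop}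
    (hM : BWr hn M n (dflt A) (dflt B)) :
    ∃ x y, M x y ∧ 0 < s ⟨n - 1, Nat.sub_lt hn Nat.one_pos⟩ x y := by
  suffices h : ∀ r, r ≤ n → ∀ x y, BWr hn M r x y → (r < n → 0 < s (idx hn r) x y) →
      ∃ x' y', M x' y' ∧ 0 < s ⟨n - 1, Nat.sub_lt hn Nat.one_pos⟩ x' y' by
    exact h n le_rfl _ _ hM (fun hlt => absurd hlt (lt_irrefl n))
  intro r
  induction r with
  | zero =>
    intro _ x y hB hw
    exact ⟨x, y, hB, hw hn⟩
  | succ r ih =>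
    intro hr x y hB hw
    have hsum : 0 < ∑ a : A (idx hn r),
        s (idx hn r) (Function.update x (idx hn r) a) y := by
      rcases Nat.eq_or_lt_of_le hr with hcase | hcase
      · have hidx0 : ((idx hn r : Fin n) : ℕ) = 0 := by rw [idx_val]; omega
        rw [hs.2.2.2.1 (idx hn r) hidx0 x y]; norm_num
      · have hstep : ((idx hn r : Fin n) : ℕ) = ((idx hn (r + 1) : Fin n) : ℕ) + 1 := by
          rw [idx_val, idx_val]; omega
        rw [hs.2.2.2.2.1 (idx hn r) (idx hn (r + 1)) hstep x y]
        exact hw hcase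
    have hex : ∃ a, 0 < s (idx hn r) (Function.update x (idx hn r) a) y := by
      by_contra hcon
      push_neg at hcon
      have : ∑ a : A (idx hn r), s (idx hn r) (Function.update x (idx hn r) a) y ≤ 0 :=
        Finset.sum_nonpos fun a _ => hcon a
      linarith
    obtain ⟨a, haw⟩ := hex
    obtain ⟨b, hb⟩ := hB a
    have hdep : s (idx hn r) (Function.update x (idx hn r) a)
        (Function.update y (idx hn r) b) =
        s (idx hn r) (Function.update x (idx hn r) a) y := by
      refine hs.2.2.1 _ _ _ _ _ (fun _ _ => rfl) (fun i hi => ?_)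
      refine Function.update_of_ne ?_ _ _
      intro hh
      rw [hh] at hi
      exact absurd hi (lt_irrefl _)
    exact ih (by omega) _ _ hb (fun _ => by rw [hdep]; exact haw)

open Classical in
/-- Indicator of equality. -/
noncomputable def eqInd {γ : Sort _} (u v : γ) : ℝ := if u = v then 1 else 0

lemma eqInd_nonneg {γ : Sort _} (u v : γ) : 0 ≤ eqInd u v := by
  unfold eqInd; split <;> norm_num

lemma eqInd_self {γ : Sort _} (u : γ) : eqInd u u = 1 := by simp [eqInd]

lemma eqInd_of_ne {γ : Sort _} {u v : γ} (h : u ≠ v) : eqInd u v = 0 := by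
  simp [eqInd, h]

lemma eqInd_congr {γ : Sort _} {u v u' v' : γ} (hu : u = u') (hv : v = v') :
    eqInd u v = eqInd u' v' := by rw [hu, hv]

lemma sum_eqInd {γ : Type _} [Fintype γ] (v : γ) : ∑ u : γ, eqInd u v = 1 := by
  classical
  unfold eqInd
  rw [Finset.sum_ite_eq' univ v (fun _ => (1 : ℝ))]
  simp

open Classical in
lemma sum_eqInd_mem {γ : Type _} [Fintype γ] (s : Finset γ) (v : γ) :
    ∑ u ∈ s, eqInd u v = if v ∈ s then 1 else 0 := by
  classical
  unfold eqInd
  rw [Finset.sum_ite_eq' s v (fun _ => (1 : ℝ))]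

/-- Product of `f` over coordinates `< m`. -/
noncomputable def cutProd (f : Fin n → ℝ) (m : ℕ) : ℝ :=
  ∏ i : Fin n, if (i : ℕ) < m then f i else 1

lemma cutProd_congr {f g : Fin n → ℝ} {m : ℕ} (h : ∀ i : Fin n, (i : ℕ) < m → f i = g i) :
    cutProd f m = cutProd g m := by
  unfold cutProd
  refine Finset.prod_congr rfl fun i _ => ?_
  by_cases hi : (i : ℕ) < m
  · rw [if_pos hi, if_pos hi, h i hi]
  · rw [if_neg hi, if_neg hi]

lemma cutProd_zero (f : Fin n → ℝ) : cutProd f 0 = 1 := by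
  unfold cutProd
  exact Finset.prod_eq_one fun i _ => by rw [if_neg (by omega)]

lemma cutProd_succ (f : Fin n → ℝ) (j : Fin n) :
    cutProd f ((j : ℕ) + 1) = f j * cutProd f (j : ℕ) := by
  classical
  unfold cutProd
  rw [← Finset.prod_filter (fun i : Fin n => (i : ℕ) < (j : ℕ) + 1) f,
    ← Finset.prod_filter (fun i : Fin n => (i : ℕ) < (j : ℕ)) f]
  have hsplit : univ.filter (fun i : Fin n => (i : ℕ) < (j : ℕ) + 1) =
      insert j (univ.filter (fun i : Fin n => (i : ℕ) < (j : ℕ))) := by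
    ext i
    simp only [mem_filter, mem_univ, true_and, mem_insert]
    constructor
    · intro h
      by_cases h' : (i : ℕ) = (j : ℕ)
      · exact Or.inl (Fin.ext h')
      · exact Or.inr (by omega)
    · rintro (h | h)
      · subst h; omega
      · omega
  rw [hsplit, Finset.prod_insert (by simp)]

lemma cutProd_nonneg {f : Fin n → ℝ} (hf : ∀ i, 0 ≤ f i) (m : ℕ) : 0 ≤ cutProd f m := by
  refine Finset.prod_nonneg fun i _ => ?_
  split
  · exact hf i
  · norm_num

lemma cutProd_full_eqInd {C : Fin n → Type} (z t : (i : Fin n) → C i) :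
    cutProd (fun i => eqInd (z i) (t i)) n = eqInd z t := by
  by_cases h : z = t
  · subst h
    rw [eqInd_self]
    unfold cutProd
    refine Finset.prod_eq_one fun i _ => ?_
    split
    · exact eqInd_self _
    · rfl
  · rw [eqInd_of_ne h]
    obtain ⟨i, hi⟩ := Function.ne_iff.mp h
    unfold cutProd
    refine Finset.prod_eq_zero (Finset.mem_univ i) ?_
    show (if ((i : ℕ) < n) then eqInd (z i) (t i) else 1) = 0
    rw [if_pos i.isLt, eqInd_of_ne hi]

/-- Summing a deterministic-strategy indicator over the current move. -/
lemma sum_cutProd_update {C : Fin n → Type} [∀ i, Fintype (C i)]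
    (j : Fin n) (z t : (i : Fin n) → C i) :
    ∑ c : C j, cutProd (fun i => eqInd (Function.update z j c i) (t i)) ((j : ℕ) + 1) =
      cutProd (fun i => eqInd (z i) (t i)) (j : ℕ) := by
  have hterm : ∀ c : C j,
      cutProd (fun i => eqInd (Function.update z j c i) (t i)) ((j : ℕ) + 1) =
      eqInd c (t j) * cutProd (fun i => eqInd (z i) (t i)) (j : ℕ) := by
    intro c
    rw [cutProd_succ]
    congr 1
    · rw [Function.update_self]
    · refine cutProd_congr fun i hi => ?_
      have : i ≠ j := by
        intro hh; rw [hh] at hi; omega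
      rw [Function.update_of_ne this]
  rw [Finset.sum_congr rfl fun c _ => hterm c, ← Finset.sum_mul, sum_eqInd, one_mul]

/-- Building a feasible point for Bob from a deterministic strategy. -/
lemma conB (hα : ∀ a, IsProbDist (α a))
    (Y : ((i : Fin n) → A i) → ((i : Fin n) → B i))
    (hdep : ∀ x x' (i : Fin n), (∀ i' : Fin n, i' ≤ i → x i' = x' i') → Y x i = Y x' i)
    (hwin : ∀ x (a : Bool), α a x ≠ 0 → β (Bool.xor a c) (Y x) ≠ 0) :
    ∃ p, MemBob A B p ∧ bobObjC A B hn α β c p = 1 := by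
  classical
  refine ⟨fun j x y => cutProd (fun i => eqInd (y i) (Y x i)) ((j : ℕ) + 1), ?_, ?_⟩
  · refine ⟨fun j x y => cutProd_nonneg (fun i => eqInd_nonneg _ _) _, ?_, ?_, ?_⟩
    · intro j x x' y y' hx hy
      refine cutProd_congr fun i hi => ?_
      have hij : i ≤ j := Fin.le_def.mpr (by omega)
      exact eqInd_congr (hy i hij) (hdep x x' i fun i' hi' => hx i' (le_trans hi' hij))
    · intro j hj x y
      rw [sum_cutProd_update j y (Y x), hj, cutProd_zero]
    · intro j k hjk x y
      rw [sum_cutProd_update j y (Y x), hjk]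
  · rw [bobObjC_eq]
    have hlast : ∀ x y, cutProd (fun i => eqInd (y i) (Y x i))
        (((⟨n - 1, Nat.sub_lt hn Nat.one_pos⟩ : Fin n) : ℕ) + 1) = eqInd y (Y x) := by
      intro x y
      rw [show ((⟨n - 1, Nat.sub_lt hn Nat.one_pos⟩ : Fin n) : ℕ) + 1 = n from by
        simp only [Fin.val_mk]; omega]
      exact cutProd_full_eqInd y (Y x)
    have hcomp : ∀ a : Bool, ∑ x : (i : Fin n) → A i, α a x *
        ∑ y ∈ univ.filter (fun y => β (Bool.xor a c) y ≠ 0),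
          cutProd (fun i => eqInd (y i) (Y x i))
            (((⟨n - 1, Nat.sub_lt hn Nat.one_pos⟩ : Fin n) : ℕ) + 1) = 1 := by
      intro a
      have hx : ∀ x : (i : Fin n) → A i, α a x *
          ∑ y ∈ univ.filter (fun y => β (Bool.xor a c) y ≠ 0),
            cutProd (fun i => eqInd (y i) (Y x i))
              (((⟨n - 1, Nat.sub_lt hn Nat.one_pos⟩ : Fin n) : ℕ) + 1) = α a x := by
        intro x
        rw [Finset.sum_congr rfl fun y _ => hlast x y, sum_eqInd_mem]
        by_cases hax : α a x = 0
        · rw [hax]; ring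
        · have hmem : Y x ∈ univ.filter (fun y => β (Bool.xor a c) y ≠ 0) :=
            Finset.mem_filter.mpr ⟨Finset.mem_univ _, hwin x a hax⟩
          rw [if_pos hmem, mul_one]
      rw [Finset.sum_congr rfl fun x _ => hx x]
      exact (hα a).2
    rw [Finset.sum_congr rfl fun a _ => hcomp a]
    simp [Fintype.sum_bool]

/-- Building a feasible point for Alice from a deterministic strategy. -/
lemma conA (hβ : ∀ b, IsProbDist (β b))
    (hdisj : ∀ y, β false y = 0 ∨ β true y = 0)
    (X : ((i : Fin n) → B i) → ((i : Fin n) → A i))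
    (hdep : ∀ y y' (i : Fin n), (∀ i' : Fin n, i' < i → y i' = y' i') → X y i = X y' i)
    (hwin : ∀ y (a : Bool), β (Bool.xor a c) y ≠ 0 → α a (X y) ≠ 0) :
    ∃ s sF, MemAlice A B hn s sF ∧ aliceObjC A B α β c sF = 1 := by
  classical
  refine ⟨fun j x y => cutProd (fun i => eqInd (x i) (X y i)) ((j : ℕ) + 1),
    fun a x y => if a = (if β c y ≠ 0 then false else true) then
      cutProd (fun i => eqInd (x i) (X y i)) n else 0, ?_, ?_⟩
  · refine ⟨fun j x y => cutProd_nonneg (fun i => eqInd_nonneg _ _) _,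
      fun a x y => ?_, ?_, ?_, ?_, ?_⟩
    · show 0 ≤ (if a = (if β c y ≠ 0 then false else true) then
          cutProd (fun i => eqInd (x i) (X y i)) n else 0)
      by_cases h : a = (if β c y ≠ 0 then false else true)
      · rw [if_pos h]
        exact cutProd_nonneg (fun i => eqInd_nonneg _ _) _
      · rw [if_neg h]
    · intro j x x' y y' hx hy
      refine cutProd_congr fun i hi => ?_
      have hij : i ≤ j := Fin.le_def.mpr (by omega)
      refine eqInd_congr (hx i hij) (hdep y y' i fun i' hi' => ?_)
      exact hy i' (lt_of_lt_of_le hi' hij)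
    · intro j hj x y
      rw [sum_cutProd_update j x (X y), hj, cutProd_zero]
    · intro j k hjk x y
      rw [sum_cutProd_update j x (X y), hjk]
    · intro x y
      beta_reduce
      rw [show ((⟨n - 1, Nat.sub_lt hn Nat.one_pos⟩ : Fin n) : ℕ) + 1 = n from by
        simp only [Fin.val_mk]; omega]
      by_cases hd : (if β c y ≠ 0 then false else true) = false
      · rw [hd]; simp
      · have hd' : (if β c y ≠ 0 then false else true) = true := by
          revert hd; split <;> simp
        rw [hd']; simp
  · unfold aliceObjC
    have hcomp : ∀ a : Bool, ∑ y : (i : Fin n) → B i, β (Bool.xor a c) y *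
        ∑ x ∈ univ.filter (fun x => α a x ≠ 0),
          (if a = (if β c y ≠ 0 then false else true) then
            cutProd (fun i => eqInd (x i) (X y i)) n else 0) = 1 := by
      intro a
      have hy : ∀ y : (i : Fin n) → B i, β (Bool.xor a c) y *
          ∑ x ∈ univ.filter (fun x => α a x ≠ 0),
            (if a = (if β c y ≠ 0 then false else true) then
              cutProd (fun i => eqInd (x i) (X y i)) n else 0) = β (Bool.xor a c) y := by
        intro y
        by_cases hby : β (Bool.xor a c) y = 0
        · rw [hby]; ring
        · have hda : (if β c y ≠ 0 then false else true) = a := by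
            cases a
            · rw [if_pos]
              simpa using hby
            · rw [if_neg]
              have : β (!c) y ≠ 0 := by simpa using hby
              cases c
              · simp only [Bool.not_false] at this
                rcases hdisj y with h | h
                · simpa using h
                · exact absurd h this
              · simp only [Bool.not_true] at this
                rcases hdisj y with h | h
                · exact absurd h this
                · simpa using h
          rw [hda]
          have hsummand : ∀ x : (i : Fin n) → A i,
              (if a = a then cutProd (fun i => eqInd (x i) (X y i)) n else 0) =
                eqInd x (X y) := fun x => by
            rw [if_pos rfl]; exact cutProd_full_eqInd x (X y)
          rw [Finset.sum_congr rfl fun x _ => hsummand x, sum_eqInd_mem]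
          have hmem : X y ∈ univ.filter (fun x => α a x ≠ 0) :=
            Finset.mem_filter.mpr ⟨Finset.mem_univ _, hwin y a hby⟩
          rw [if_pos hmem, mul_one]
      rw [Finset.sum_congr rfl fun y _ => hy y]
      exact (hβ (Bool.xor a c)).2
    rw [Finset.sum_congr rfl fun a _ => hcomp a]
    simp [Fintype.sum_bool]

end Protocol


theorem classical_exactly_one_cheats {n : ℕ} (hn : 0 < n) (A B : Fin n → Type)
    [∀ i, Fintype (A i)] [∀ i, Nonempty (A i)] [∀ i, Fintype (B i)] [∀ i, Nonempty (B i)]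
    (α : Bool → ((i : Fin n) → A i) → ℝ) (β : Bool → ((i : Fin n) → B i) → ℝ)
    (hα : ∀ a, IsProbDist (α a)) (hβ : ∀ b, IsProbDist (β b))
    (CA CB : Bool → ℝ)
    (hCA : ∀ c, IsGreatest (aliceValsC A B hn α β c) (CA c))
    (hCB : ∀ c, IsGreatest (bobValsC A B hn α β c) (CB c)) :
    Xor' (CA false = 1 ∧ CA true = 1 ∧ CB false < 1 ∧ CB true < 1)
         (CB false = 1 ∧ CB true = 1 ∧ CA false < 1 ∧ CA true < 1) := by
  classical
  have hsupp : ∀ b : Bool, ∃ y, β b y ≠ 0 := by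
    intro b
    by_contra hc
    push_neg at hc
    have h2 := (hβ b).2
    rw [Finset.sum_congr rfl fun y _ => hc y] at h2
    simp at h2
  have hCBle : ∀ c, CB c ≤ 1 := by
    intro c
    obtain ⟨p₀, hp₀, hv⟩ := (hCB c).1
    rw [hv]
    exact objB_le hn α β c hα hp₀
  have hCAle : ∀ c, CA c ≤ 1 := by
    intro c
    obtain ⟨s₀, sF₀, hmem, hv⟩ := (hCA c).1
    rw [hv]
    exact objA_le hn α β c hβ hmem
  by_cases hover : ∃ y, β false y ≠ 0 ∧ β true y ≠ 0
  · -- the honest distributions of Bob overlap: Bob cheats perfectly, Alice cannot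
    obtain ⟨y0, hb0, hb1⟩ := hover
    have hCB1 : ∀ c, CB c = 1 := by
      intro c
      refine le_antisymm (hCBle c) ?_
      have hwin : ∀ x (a : Bool), α a x ≠ 0 → β (Bool.xor a c) y0 ≠ 0 := by
        intro x a hax
        cases a <;> cases c
        · simpa using hb0
        · simpa using hb1
        · simpa using hb1
        · simpa using hb0
      obtain ⟨p, hp, hval⟩ := conB hn α β c hα (fun _ => y0) (fun _ _ _ _ => rfl) hwin
      exact (hCB c).2 ⟨p, hp, hval.symm⟩
    have hCAlt : ∀ c, CA c < 1 := by
      intro c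
      obtain ⟨s₀, sF₀, hmem, hv⟩ := (hCA c).1
      rw [hv]
      exact objA_lt_overlap hn α β c hβ hmem y0 hb0 hb1
    refine Or.inr ⟨⟨hCB1 false, hCB1 true, hCAlt false, hCAlt true⟩, ?_⟩
    rintro ⟨-, -, h3, -⟩
    exact absurd (hCB1 false) (ne_of_lt h3)
  · -- disjoint supports
    push_neg at hover
    have hdisj : ∀ y, β false y = 0 ∨ β true y = 0 := by
      intro y
      by_cases h : β false y = 0
      · exact Or.inl h
      · exact Or.inr (hover y h)
    have hdisj2 : ∀ (c : Bool) y, β c y ≠ 0 → β (!c) y = 0 := by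
      intro c y hc
      cases c
      · simpa using (hdisj y).resolve_left hc
      · simpa using (hdisj y).resolve_right hc
    have hCA1 : ∀ c : Bool, AWr hn (LAp (fun x => α false x ≠ 0) (fun x => α true x ≠ 0)
        (fun y => β c y ≠ 0) (fun y => β (!c) y ≠ 0)) n (dflt A) (dflt B) → CA c = 1 := by
      intro c hAW
      obtain ⟨X, hXdep, hXwin⟩ := extractA hn _ hAW
      have hwin : ∀ y (a : Bool), β (Bool.xor a c) y ≠ 0 → α a (X y) ≠ 0 := by
        intro y a hb
        cases a
        · have hb' : β c y ≠ 0 := by simpa using hb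
          rcases hXwin y (Or.inl hb') with ⟨-, h⟩ | ⟨h1, -⟩
          · exact h
          · exact absurd (hdisj2 c y hb') h1
        · have hb' : β (!c) y ≠ 0 := by simpa using hb
          rcases hXwin y (Or.inr hb') with ⟨h0, -⟩ | ⟨-, h⟩
          · exact absurd (hdisj2 c y h0) hb'
          · exact h
      obtain ⟨s, sF, hmem, hval⟩ := conA hn α β c hβ hdisj X hXdep hwin
      exact le_antisymm (hCAle c) ((hCA c).2 ⟨s, sF, hmem, hval.symm⟩)
    have hCB1g : ∀ c : Bool, BWr hn (LBp (fun x => α false x ≠ 0) (fun x => α true x ≠ 0)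
        (fun y => β c y ≠ 0) (fun y => β (!c) y ≠ 0)) n (dflt A) (dflt B) → CB c = 1 := by
      intro c hBW
      obtain ⟨Y, hYdep, hYwin⟩ := extractB hn _ hBW
      have hwin : ∀ x (a : Bool), α a x ≠ 0 → β (Bool.xor a c) (Y x) ≠ 0 := by
        intro x a hax
        cases a
        · simpa using (hYwin x).1 hax
        · simpa using (hYwin x).2 hax
      obtain ⟨p, hp, hval⟩ := conB hn α β c hα Y hYdep hwin
      exact le_antisymm (hCBle c) ((hCB c).2 ⟨p, hp, hval.symm⟩)
    have hCBlt : ∀ c : Bool, ¬ BWr hn (LBp (fun x => α false x ≠ 0) (fun x => α true x ≠ 0)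
        (fun y => β c y ≠ 0) (fun y => β (!c) y ≠ 0)) n (dflt A) (dflt B) → CB c < 1 := by
      intro c hnB
      obtain ⟨p₀, hp₀, hv⟩ := (hCB c).1
      rw [hv]
      have hforce := not_BWr n _ _ hnB
      obtain ⟨xs, ys, hM, hq⟩ := playB hn hp₀ hforce
      have hcases : (α false xs ≠ 0 ∧ β c ys = 0) ∨ (α true xs ≠ 0 ∧ β (!c) ys = 0) := by
        unfold LBp at hM
        tauto
      rcases hcases with ⟨hx0, hy0⟩ | ⟨hx1, hy1⟩
      · exact objB_lt hn α β c hα hp₀ false xs ys hx0 (by simpa using hy0) hq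
      · exact objB_lt hn α β c hα hp₀ true xs ys hx1 (by simpa using hy1) hq
    have hCAltg : ∀ c : Bool, ¬ AWr hn (LAp (fun x => α false x ≠ 0) (fun x => α true x ≠ 0)
        (fun y => β c y ≠ 0) (fun y => β (!c) y ≠ 0)) n (dflt A) (dflt B) → CA c < 1 := by
      intro c hnA
      obtain ⟨s₀, sF₀, hmem, hv⟩ := (hCA c).1
      rw [hv]
      have hforce := not_AWr n _ _ hnA
      obtain ⟨xs, ys, hM, hq⟩ := playA hn hmem hforce
      have hget : (β c ys ≠ 0 ∧ α false xs = 0) ∨ (β (!c) ys ≠ 0 ∧ α true xs = 0) := by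
        unfold LAp at hM
        tauto
      rcases hget with ⟨hb, hx⟩ | ⟨hb, hx⟩
      · refine objA_lt_of_comp hn α β c hβ hmem false
          (objA_comp_lt hn α β c hβ hmem false ys (by simpa using hb) ?_)
        have hd := aliceObjC_w_deficit hn α hmem false ys xs hx
        linarith
      · refine objA_lt_of_comp hn α β c hβ hmem true
          (objA_comp_lt hn α β c hβ hmem true ys (by simpa using hb) ?_)
        have hd := aliceObjC_w_deficit hn α hmem true ys xs hx
        linarith
    have main_inst : ∀ c : Bool,
        BWr hn (LBp (fun x => α false x ≠ 0) (fun x => α true x ≠ 0)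
          (fun y => β c y ≠ 0) (fun y => β (!c) y ≠ 0)) n (dflt A) (dflt B) →
        AWr hn (LAp (fun x => α false x ≠ 0) (fun x => α true x ≠ 0)
          (fun y => β c y ≠ 0) (fun y => β (!c) y ≠ 0)) n (dflt A) (dflt B) → False := by
      intro c hB hA
      refine main_lemma (S0 := fun y => β c y ≠ 0) (S1 := fun y => β (!c) y ≠ 0)
        ?_ n (dflt A) (dflt B) ?_ ?_ hB hA
      · intro y h0 h1
        exact h1 (hdisj2 c y h0)
      · obtain ⟨yc, hyc⟩ := hsupp c
        exact ⟨yc, hyc, fun i hi => absurd hi (by omega)⟩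
      · obtain ⟨yc, hyc⟩ := hsupp (!c)
        exact ⟨yc, hyc, fun i hi => absurd hi (by omega)⟩
    by_cases hAWf : AWr hn (LAp (fun x => α false x ≠ 0) (fun x => α true x ≠ 0)
        (fun y => β false y ≠ 0) (fun y => β true y ≠ 0)) n (dflt A) (dflt B)
    · have hnBf : ¬ BWr hn (LBp (fun x => α false x ≠ 0) (fun x => α true x ≠ 0)
          (fun y => β false y ≠ 0) (fun y => β true y ≠ 0)) n (dflt A) (dflt B) :=
        fun hB => main_inst false hB hAWf
      have hAWt : AWr hn (LAp (fun x => α false x ≠ 0) (fun x => α true x ≠ 0)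
          (fun y => β true y ≠ 0) (fun y => β false y ≠ 0)) n (dflt A) (dflt B) :=
        AWr_mono notLB_imp_LA n _ _ (not_BWr n _ _ hnBf)
      have hnBt : ¬ BWr hn (LBp (fun x => α false x ≠ 0) (fun x => α true x ≠ 0)
          (fun y => β true y ≠ 0) (fun y => β false y ≠ 0)) n (dflt A) (dflt B) :=
        fun hB => main_inst true hB hAWt
      refine Or.inl ⟨⟨hCA1 false hAWf, hCA1 true hAWt, hCBlt false hnBf, hCBlt true hnBt⟩, ?_⟩
      rintro ⟨h1, -, -, -⟩
      exact absurd h1 (ne_of_lt (hCBlt false hnBf))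
    · have hBWt : BWr hn (LBp (fun x => α false x ≠ 0) (fun x => α true x ≠ 0)
          (fun y => β true y ≠ 0) (fun y => β false y ≠ 0)) n (dflt A) (dflt B) :=
        BWr_mono notLA_imp_LB n _ _ (not_AWr n _ _ hAWf)
      have hnAt : ¬ AWr hn (LAp (fun x => α false x ≠ 0) (fun x => α true x ≠ 0)
          (fun y => β true y ≠ 0) (fun y => β false y ≠ 0)) n (dflt A) (dflt B) :=
        fun hA => main_inst true hBWt hA
      have hBWf : BWr hn (LBp (fun x => α false x ≠ 0) (fun x => α true x ≠ 0)
          (fun y => β false y ≠ 0) (fun y => β true y ≠ 0)) n (dflt A) (dflt B) :=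
        BWr_mono notLA_imp_LB n _ _ (not_AWr n _ _ hnAt)
      refine Or.inr ⟨⟨hCB1g false hBWf, hCB1g true hBWt, hCAltg false hAWf, hCAltg true hnAt⟩, ?_⟩
      rintro ⟨h1, -, -, -⟩
      exact absurd h1 (ne_of_lt (hCAltg false hAWf))

end BCCF
end

section
/- For all probability distributions α₀, α₁ on A and β₀, β₁ on B, it is not the case that both max{P*_{A,0}, P*_{A,1}} = 1 and max{P*_{B,0}, P*_{B,1}} = 1; that is, in every quantum BCCF-protocol at most one party can cheat with probability 1. -/
open Finset

namespace BCCF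

open scoped Classical

lemma fid_le_mul {ι : Type} [Fintype ι] {u v : ι → ℝ} (hu : ∀ i, 0 ≤ u i) (hv : ∀ i, 0 ≤ v i) :
    fid u v ≤ (∑ i, u i) * (∑ i, v i) := by
  have h : ∀ i : ι, Real.sqrt (u i * v i) = Real.sqrt (u i) * Real.sqrt (v i) := fun i =>
    Real.sqrt_mul (hu i) _
  rw [fid]
  simp_rw [h]
  calc (∑ i, Real.sqrt (u i) * Real.sqrt (v i))^2
      ≤ (∑ i, Real.sqrt (u i)^2) * (∑ i, Real.sqrt (v i)^2) :=
        Finset.sum_mul_sq_le_sq_mul_sq univ _ _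
    _ = (∑ i, u i) * (∑ i, v i) := by
        congr 1
        · exact Finset.sum_congr rfl fun i _ => Real.sq_sqrt (hu i)
        · exact Finset.sum_congr rfl fun i _ => Real.sq_sqrt (hv i)

lemma fid_eq_one {ι : Type} [Fintype ι] {u v : ι → ℝ} (hu : ∀ i, 0 ≤ u i) (hv : ∀ i, 0 ≤ v i)
    (hsu : ∑ i, u i = 1) (hsv : ∑ i, v i = 1) (h : fid u v = 1) : ∀ i, u i = v i := by
  have hs0 : (0:ℝ) ≤ ∑ i, Real.sqrt (u i * v i) :=
    Finset.sum_nonneg fun i _ => Real.sqrt_nonneg _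
  have hs1 : ∑ i, Real.sqrt (u i * v i) = 1 := by
    rw [fid] at h; nlinarith [h]
  have hmul : ∀ i : ι, Real.sqrt (u i * v i) = Real.sqrt (u i) * Real.sqrt (v i) := fun i =>
    Real.sqrt_mul (hu i) _
  have hzero : ∑ i, (Real.sqrt (u i) - Real.sqrt (v i))^2 = 0 := by
    have : ∀ i : ι, (Real.sqrt (u i) - Real.sqrt (v i))^2
        = u i + v i - 2 * Real.sqrt (u i * v i) := by
      intro i
      rw [hmul i, sub_sq, Real.sq_sqrt (hu i), Real.sq_sqrt (hv i)]; ring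
    simp_rw [this]
    rw [Finset.sum_sub_distrib, Finset.sum_add_distrib, hsu, hsv, ← Finset.mul_sum, hs1]
    ring
  intro i
  have := (Finset.sum_eq_zero_iff_of_nonneg (fun i _ => sq_nonneg _)).1 hzero i (mem_univ i)
  have h2 : Real.sqrt (u i) = Real.sqrt (v i) := by
    have := sq_eq_zero_iff.1 this; linarith
  calc u i = Real.sqrt (u i)^2 := (Real.sq_sqrt (hu i)).symm
    _ = Real.sqrt (v i)^2 := by rw [h2]
    _ = v i := Real.sq_sqrt (hv i)

section Chain

variable {n : ℕ} {ι : Fin n → Type} [∀ i, Fintype (ι i)]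

lemma filter_last_eq (hn : 0 < n) (z : (i : Fin n) → ι i) :
    univ.filter (fun z' : (i : Fin n) → ι i =>
      ∀ i, i ≤ (⟨n - 1, Nat.sub_lt hn Nat.one_pos⟩ : Fin n) → z' i = z i) = {z} := by
  ext z'
  simp only [mem_filter, mem_univ, true_and, mem_singleton]
  constructor
  · intro h; funext i; exact h i (by simp [Fin.le_def]; omega)
  · rintro rfl; intro i _; rfl

lemma filter_le_succ (j j' : Fin n) (hj : (j' : ℕ) = (j : ℕ) + 1) (z : (i : Fin n) → ι i)
    (b : ι j') :
    (univ.filter (fun z' : (i : Fin n) → ι i => ∀ i, i ≤ j → z' i = z i)).filter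
        (fun z' => z' j' = b)
      = univ.filter (fun z' => ∀ i, i ≤ j' → z' i = Function.update z j' b i) := by
  ext z'
  simp only [mem_filter, mem_univ, true_and]
  constructor
  · rintro ⟨h1, h2⟩ i hi
    rcases eq_or_ne i j' with rfl | hne
    · simpa using h2
    · rw [Function.update_of_ne hne]
      have hiv : (i : ℕ) ≠ (j' : ℕ) := fun h => hne (Fin.ext h)
      exact h1 i (by rw [Fin.le_def] at hi ⊢; omega)
  · intro h
    constructor
    · intro i hi
      have hne : i ≠ j' := by
        intro he; rw [he, Fin.le_def] at hi; omega
      have := h i (by rw [Fin.le_def] at hi ⊢; omega)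
      rwa [Function.update_of_ne hne] at this
    · have := h j' (le_refl _)
      simpa using this

lemma chain_eq (hn : 0 < n) (f : Fin n → ((i : Fin n) → ι i) → ℝ)
    (hstep : ∀ j k : Fin n, (j : ℕ) = (k : ℕ) + 1 → ∀ z,
      ∑ b : ι j, f j (Function.update z j b) = f k z) :
    ∀ (j : Fin n) (z), f j z
      = ∑ z' ∈ univ.filter (fun z' => ∀ i, i ≤ j → z' i = z i),
          f ⟨n - 1, Nat.sub_lt hn Nat.one_pos⟩ z' := by
  suffices H : ∀ m (j : Fin n), n - 1 - (j : ℕ) = m → ∀ z, f j z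
      = ∑ z' ∈ univ.filter (fun z' => ∀ i, i ≤ j → z' i = z i),
          f ⟨n - 1, Nat.sub_lt hn Nat.one_pos⟩ z' by
    intro j z; exact H _ j rfl z
  intro m
  induction m with
  | zero =>
    intro j hj z
    have hjv : (j : ℕ) = n - 1 := by omega
    have hj' : j = ⟨n - 1, Nat.sub_lt hn Nat.one_pos⟩ := Fin.ext hjv
    subst hj'
    rw [filter_last_eq hn z, Finset.sum_singleton]
  | succ m ih =>
    intro j hj z
    have hlt : (j : ℕ) + 1 < n := by have := j.isLt; omega
    set j' : Fin n := ⟨(j : ℕ) + 1, hlt⟩ with hj'def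
    have hstep' := hstep j' j rfl z
    rw [← hstep']
    have ihz : ∀ b : ι j', f j' (Function.update z j' b)
        = ∑ z' ∈ univ.filter (fun z' => ∀ i, i ≤ j' → z' i = Function.update z j' b i),
            f ⟨n - 1, Nat.sub_lt hn Nat.one_pos⟩ z' := by
      intro b; exact ih j' (by simp [hj'def]; omega) _
    simp_rw [ihz]
    rw [← Finset.sum_fiberwise (univ.filter (fun z' : (i : Fin n) → ι i =>
        ∀ i, i ≤ j → z' i = z i)) (fun z' => z' j')
        (f ⟨n - 1, Nat.sub_lt hn Nat.one_pos⟩)]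
    exact Finset.sum_congr rfl fun b _ => by rw [filter_le_succ j j' rfl z b]

lemma chain_total (hn : 0 < n) (f : Fin n → ((i : Fin n) → ι i) → ℝ)
    (hstep : ∀ j k : Fin n, (j : ℕ) = (k : ℕ) + 1 → ∀ z,
      ∑ b : ι j, f j (Function.update z j b) = f k z)
    (hbase : ∀ j : Fin n, (j : ℕ) = 0 → ∀ z,
      ∑ b : ι j, f j (Function.update z j b) = 1)
    (z : (i : Fin n) → ι i) :
    ∑ z', f ⟨n - 1, Nat.sub_lt hn Nat.one_pos⟩ z' = 1 := by
  set j0 : Fin n := ⟨0, hn⟩ with hj0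
  have hb := hbase j0 rfl z
  have hc : ∀ b : ι j0, f j0 (Function.update z j0 b)
      = ∑ z' ∈ univ.filter (fun z' => z' j0 = b),
          f ⟨n - 1, Nat.sub_lt hn Nat.one_pos⟩ z' := by
    intro b
    rw [chain_eq hn f hstep j0 (Function.update z j0 b)]
    apply Finset.sum_congr _ (fun _ _ => rfl)
    ext z'
    simp only [mem_filter, mem_univ, true_and]
    constructor
    · intro h
      have := h j0 (le_refl _); simpa using this
    · intro h i hi
      have : i = j0 := by rw [Fin.le_def] at hi; exact Fin.ext (by simp [hj0] at hi ⊢; omega)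
      subst this; simpa using h
  rw [← hb]
  simp_rw [hc]
  exact (Finset.sum_fiberwise _ _ _).symm

end Chain

section Marginal

variable {n : ℕ} {ι : Fin n → Type} [∀ i, Fintype (ι i)] [∀ i, Nonempty (ι i)]

lemma sum_mul_congr (j : Fin n) (α₀ α₁ g : ((i : Fin n) → ι i) → ℝ)
    (hEq : ∀ z : (i : Fin n) → ι i, ∑ z' ∈ univ.filter (fun z' => ∀ i, i ≤ j → z' i = z i), α₀ z'
      = ∑ z' ∈ univ.filter (fun z' => ∀ i, i ≤ j → z' i = z i), α₁ z')
    (hg : ∀ z z' : (i : Fin n) → ι i, (∀ i, i ≤ j → z i = z' i) → g z = g z') :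
    ∑ z, α₀ z * g z = ∑ z, α₁ z * g z := by
  have hne : Nonempty ((i : Fin n) → ι i) := ⟨fun i => Classical.arbitrary _⟩
  set d : (i : Fin n) → ι i := Classical.arbitrary _ with hd
  set e : ((i : Fin n) → ι i) → ((i : Fin n) → ι i) :=
    fun z i => if i ≤ j then z i else d i with he
  have hge : ∀ z, g z = g (e z) := fun z => hg z (e z) (fun i hi => by simp [he, hi])
  have hfiber : ∀ z₀, (univ.filter (fun z => e z = e z₀))
      = univ.filter (fun z' => ∀ i, i ≤ j → z' i = e z₀ i) := by
    intro z₀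
    ext z
    simp only [mem_filter, mem_univ, true_and]
    constructor
    · intro h i hi
      rw [← h]; simp [he, hi]
    · intro h
      funext i
      by_cases hi : i ≤ j
      · simpa [he, hi] using h i hi
      · simp [he, hi]
  have key : ∀ α : ((i : Fin n) → ι i) → ℝ, ∑ z, α z * g z
      = ∑ w ∈ univ.image e, g w * ∑ z' ∈ univ.filter (fun z' => ∀ i, i ≤ j → z' i = w i), α z' := by
    intro α
    rw [← Finset.sum_fiberwise_of_maps_to (g := e) (fun z _ => Finset.mem_image_of_mem e (mem_univ z))]
    refine Finset.sum_congr rfl fun w hw => ?_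
    obtain ⟨z₀, _, rfl⟩ := Finset.mem_image.1 hw
    rw [← hfiber z₀, Finset.mul_sum]
    refine Finset.sum_congr rfl fun z hz => ?_
    have hez : e z = e z₀ := (Finset.mem_filter.1 hz).2
    rw [hge z, hez]; ring
  rw [key α₀, key α₁]
  exact Finset.sum_congr rfl fun w hw => by rw [hEq]

end Marginal

lemma bob_extract {Y : Type} [Fintype Y] (D q : Bool → Y → ℝ)
    (hD0 : ∀ a y, 0 ≤ D a y) (hD1 : ∀ a, ∑ y, D a y = 1)
    (hq0 : ∀ a y, 0 ≤ q a y) (hq1 : ∀ a, ∑ y, q a y = 1)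
    (hval : ∑ a : Bool, fid (q a) (D a) = 2) : ∀ a y, q a y = D a y := by
  have hle : ∀ a, fid (q a) (D a) ≤ 1 := fun a => by
    have := fid_le_mul (hq0 a) (hD0 a); rwa [hq1 a, hD1 a, mul_one] at this
  rw [Fintype.sum_bool] at hval
  have h1 : ∀ a, fid (q a) (D a) = 1 := by
    intro a; cases a
    · linarith [hle true, hle false]
    · linarith [hle true, hle false]
  exact fun a => fid_eq_one (hq0 a) (hD0 a) (hq1 a) (hD1 a) (h1 a)

lemma alice_extract {X Y : Type} [Fintype X] [Fintype Y]
    (G : Bool → Y → ℝ) (u : Bool → X → Y → ℝ) (αv : Bool → X → ℝ)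
    (hG0 : ∀ a y, 0 ≤ G a y) (hG1 : ∀ a, ∑ y, G a y = 1)
    (hu0 : ∀ a x y, 0 ≤ u a x y)
    (hα0 : ∀ a x, 0 ≤ αv a x) (hα1 : ∀ a, ∑ x, αv a x = 1)
    (hT : ∀ y, (∑ x, u false x y) + (∑ x, u true x y) = 1)
    (hval : ∑ a : Bool, ∑ y, G a y * fid (fun x => u a x y) (αv a) = 2) :
    (∀ y, G false y = 0 ∨ G true y = 0) ∧
    (∀ a y, G a y ≠ 0 → ∀ x, u a x y = αv a x ∧ u (!a) x y = 0) := by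
  have hfidT : ∀ (a : Bool) y, fid (fun x => u a x y) (αv a) ≤ ∑ x, u a x y := by
    intro a y
    have := fid_le_mul (u := fun x => u a x y) (v := αv a) (fun x => hu0 a x y) (hα0 a)
    rwa [hα1 a, mul_one] at this
  have hfid0 : ∀ (a : Bool) y, 0 ≤ fid (fun x => u a x y) (αv a) := fun a y => sq_nonneg _
  have hTnn : ∀ (a : Bool) y, 0 ≤ ∑ x, u a x y := fun a y =>
    Finset.sum_nonneg fun x _ => hu0 a x y
  have hswap : ∀ F : Bool → Y → ℝ, ∑ a : Bool, ∑ y, F a y = ∑ y, (F false y + F true y) := by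
    intro F; rw [Fintype.sum_bool, ← Finset.sum_add_distrib]
    exact Finset.sum_congr rfl fun y _ => add_comm _ _
  have hA : ∑ y, (G false y * fid (fun x => u false x y) (αv false)
      + G true y * fid (fun x => u true x y) (αv true)) = 2 := by
    rw [← hswap (fun a y => G a y * fid (fun x => u a x y) (αv a))]; exact hval
  have hAB : ∑ y, (G false y * fid (fun x => u false x y) (αv false)
        + G true y * fid (fun x => u true x y) (αv true))
      ≤ ∑ y, (G false y * (∑ x, u false x y) + G true y * (∑ x, u true x y)) :=
    Finset.sum_le_sum fun y _ => add_le_add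
      (mul_le_mul_of_nonneg_left (hfidT false y) (hG0 false y))
      (mul_le_mul_of_nonneg_left (hfidT true y) (hG0 true y))
  have step2 : ∀ y, G false y * (∑ x, u false x y) + G true y * (∑ x, u true x y)
      ≤ max (G false y) (G true y) := by
    intro y
    calc G false y * (∑ x, u false x y) + G true y * (∑ x, u true x y)
        ≤ max (G false y) (G true y) * (∑ x, u false x y)
          + max (G false y) (G true y) * (∑ x, u true x y) :=
          add_le_add (mul_le_mul_of_nonneg_right (le_max_left _ _) (hTnn false y))
            (mul_le_mul_of_nonneg_right (le_max_right _ _) (hTnn true y))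
      _ = max (G false y) (G true y) * ((∑ x, u false x y) + (∑ x, u true x y)) := by ring
      _ = max (G false y) (G true y) := by rw [hT y, mul_one]
  have hBC : ∑ y, (G false y * (∑ x, u false x y) + G true y * (∑ x, u true x y))
      ≤ ∑ y, max (G false y) (G true y) := Finset.sum_le_sum fun y _ => step2 y
  have hmaxle : ∀ y, max (G false y) (G true y) ≤ G false y + G true y := fun y =>
    max_le (le_add_of_nonneg_right (hG0 true y)) (le_add_of_nonneg_left (hG0 false y))
  have hCD : ∑ y, max (G false y) (G true y) ≤ 2 := by
    calc ∑ y, max (G false y) (G true y) ≤ ∑ y, (G false y + G true y) :=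
          Finset.sum_le_sum fun y _ => hmaxle y
      _ = 2 := by rw [Finset.sum_add_distrib, hG1 false, hG1 true]; norm_num
  have hB2 : ∑ y, (G false y * (∑ x, u false x y) + G true y * (∑ x, u true x y)) = 2 :=
    le_antisymm (hBC.trans hCD) (by linarith)
  have hC2 : ∑ y, max (G false y) (G true y) = 2 := le_antisymm hCD (by linarith)
  have pt2 : ∀ y, max (G false y) (G true y) = G false y + G true y := by
    have h0 : ∑ y, ((G false y + G true y) - max (G false y) (G true y)) = 0 := by
      rw [Finset.sum_sub_distrib, hC2, Finset.sum_add_distrib, hG1 false, hG1 true]; norm_num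
    intro y
    have := (Finset.sum_eq_zero_iff_of_nonneg
      (fun y _ => sub_nonneg.2 (hmaxle y))).1 h0 y (mem_univ y)
    linarith
  have pt1 : ∀ y, G false y * (∑ x, u false x y) + G true y * (∑ x, u true x y)
      = max (G false y) (G true y) := by
    have h0 : ∑ y, (max (G false y) (G true y)
        - (G false y * (∑ x, u false x y) + G true y * (∑ x, u true x y))) = 0 := by
      rw [Finset.sum_sub_distrib, hC2, hB2]; norm_num
    intro y
    have := (Finset.sum_eq_zero_iff_of_nonneg
      (fun y _ => sub_nonneg.2 (step2 y))).1 h0 y (mem_univ y)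
    linarith
  have pt3 : ∀ y, G false y * ((∑ x, u false x y) - fid (fun x => u false x y) (αv false)) = 0
      ∧ G true y * ((∑ x, u true x y) - fid (fun x => u true x y) (αv true)) = 0 := by
    have h0 : ∑ y, (G false y * ((∑ x, u false x y) - fid (fun x => u false x y) (αv false))
        + G true y * ((∑ x, u true x y) - fid (fun x => u true x y) (αv true))) = 0 := by
      have heq : ∀ y, (G false y * ((∑ x, u false x y) - fid (fun x => u false x y) (αv false))
          + G true y * ((∑ x, u true x y) - fid (fun x => u true x y) (αv true)))
          = (G false y * (∑ x, u false x y) + G true y * (∑ x, u true x y))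
            - (G false y * fid (fun x => u false x y) (αv false)
              + G true y * fid (fun x => u true x y) (αv true)) := fun y => by ring
      simp_rw [heq]
      rw [Finset.sum_sub_distrib, hB2, hA]; norm_num
    have hnn : ∀ (a : Bool) y, 0 ≤ G a y * ((∑ x, u a x y) - fid (fun x => u a x y) (αv a)) :=
      fun a y => mul_nonneg (hG0 a y) (sub_nonneg.2 (hfidT a y))
    intro y
    have := (Finset.sum_eq_zero_iff_of_nonneg
      (fun y _ => add_nonneg (hnn false y) (hnn true y))).1 h0 y (mem_univ y)
    constructor
    · linarith [hnn false y, hnn true y]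
    · linarith [hnn false y, hnn true y]
  have hdisj : ∀ y, G false y = 0 ∨ G true y = 0 := by
    intro y
    rcases max_cases (G false y) (G true y) with ⟨h, _⟩ | ⟨h, _⟩
    · right; have := pt2 y; linarith
    · left; have := pt2 y; linarith
  refine ⟨hdisj, ?_⟩
  intro a y hy
  have hya : 0 < G a y := (hG0 a y).lt_of_ne (Ne.symm hy)
  cases a
  · have hoth : G true y = 0 := by
      rcases hdisj y with h | h
      · exact absurd h hy
      · exact h
    have h1 := pt1 y
    have h2 := pt2 y
    have hT1 : ∑ x, u false x y = 1 := by
      have hGT : G false y * (∑ x, u false x y) = G false y * 1 := by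
        rw [hoth] at h1 h2; rw [mul_one]; linarith
      exact mul_left_cancel₀ (ne_of_gt hya) hGT
    have hT0' : ∑ x, u true x y = 0 := by linarith [hT y]
    have huT0 : ∀ x, u true x y = 0 := fun x =>
      (Finset.sum_eq_zero_iff_of_nonneg (fun x _ => hu0 true x y)).1 hT0' x (mem_univ x)
    have hFd : fid (fun x => u false x y) (αv false) = 1 := by
      have h3 := (pt3 y).1
      rcases mul_eq_zero.1 h3 with h | h
      · exact absurd h hy
      · linarith
    have := fid_eq_one (fun x => hu0 false x y) (hα0 false) hT1 (hα1 false) hFd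
    exact fun x => ⟨this x, huT0 x⟩
  · have hoth : G false y = 0 := by
      rcases hdisj y with h | h
      · exact h
      · exact absurd h hy
    have h1 := pt1 y
    have h2 := pt2 y
    have hT1 : ∑ x, u true x y = 1 := by
      have hGT : G true y * (∑ x, u true x y) = G true y * 1 := by
        rw [hoth] at h1 h2; rw [mul_one]; linarith
      exact mul_left_cancel₀ (ne_of_gt hya) hGT
    have hT0' : ∑ x, u false x y = 0 := by linarith [hT y]
    have huT0 : ∀ x, u false x y = 0 := fun x =>
      (Finset.sum_eq_zero_iff_of_nonneg (fun x _ => hu0 false x y)).1 hT0' x (mem_univ x)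
    have hFd : fid (fun x => u true x y) (αv true) = 1 := by
      have h3 := (pt3 y).2
      rcases mul_eq_zero.1 h3 with h | h
      · exact absurd h hy
      · linarith
    have := fid_eq_one (fun x => hu0 true x y) (hα0 true) hT1 (hα1 true) hFd
    exact fun x => ⟨this x, huT0 x⟩

end BCCF

namespace BCCF

theorem quantum_not_both_perfect {n : ℕ} (hn : 0 < n) (A B : Fin n → Type)
    [∀ i, Fintype (A i)] [∀ i, Nonempty (A i)] [∀ i, Fintype (B i)] [∀ i, Nonempty (B i)]
    (α : Bool → ((i : Fin n) → A i) → ℝ) (β : Bool → ((i : Fin n) → B i) → ℝ)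
    (hα : ∀ a, IsProbDist (α a)) (hβ : ∀ b, IsProbDist (β b))
    (PA PB : Bool → ℝ)
    (hPA : ∀ c, IsGreatest (aliceValsQ A B hn α β c) (PA c))
    (hPB : ∀ c, IsGreatest (bobValsQ A B hn α β c) (PB c)) :
    ¬ (max (PA false) (PA true) = 1 ∧ max (PB false) (PB true) = 1) := by
  rintro ⟨hA1, hB1⟩
  classical
  obtain ⟨c, hc⟩ : ∃ c, PA c = 1 := by
    rcases max_choice (PA false) (PA true) with h | h
    · exact ⟨false, h.symm.trans hA1⟩
    · exact ⟨true, h.symm.trans hA1⟩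
  obtain ⟨c', hc'⟩ : ∃ c', PB c' = 1 := by
    rcases max_choice (PB false) (PB true) with h | h
    · exact ⟨false, h.symm.trans hB1⟩
    · exact ⟨true, h.symm.trans hB1⟩
  obtain ⟨sf, sFf, hsmem, hsval⟩ := (hPA c).1
  obtain ⟨pf, hpmem, hpval⟩ := (hPB c').1
  obtain ⟨hs0, hsF0, hsdep, hsbase, hsstep, hslastE⟩ := hsmem
  obtain ⟨hp0, hpdep, hpbase, hpstep⟩ := hpmem
  -- marginal consistency facts from the chain constraints
  have hAsum1 : ∀ y, ∑ x, sf ⟨n - 1, Nat.sub_lt hn Nat.one_pos⟩ x y = 1 := fun y =>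
    chain_total hn (fun j x => sf j x y) (fun j k h z => hsstep j k h z y)
      (fun j h z => hsbase j h z y) (fun i => Classical.arbitrary _)
  have hBsum1 : ∀ x, ∑ y, pf ⟨n - 1, Nat.sub_lt hn Nat.one_pos⟩ x y = 1 := fun x =>
    chain_total hn (fun j y => pf j x y) (fun j k h z => hpstep j k h x z)
      (fun j h z => hpbase j h x z) (fun i => Classical.arbitrary _)
  have hTsum : ∀ y, (∑ x, sFf false x y) + (∑ x, sFf true x y) = 1 := by
    intro y
    rw [← Finset.sum_add_distrib, ← hAsum1 y]
    exact Finset.sum_congr rfl fun x _ => hslastE x y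
  -- Alice's perfect cheating analysis
  have hAv : ∑ a : Bool, ∑ y, β (Bool.xor a c) y * fid (fun x => sFf a x y) (α a) = 2 := by
    have h2 : aliceObjQ A B α β c sFf = 1 := by rw [← hsval]; exact hc
    unfold aliceObjQ at h2
    linarith
  obtain ⟨hdisj, hA2'⟩ := alice_extract (fun a y => β (Bool.xor a c) y)
      (fun a x y => sFf a x y) α
      (fun a y => (hβ _).1 y) (fun a => (hβ _).2) (fun a x y => hsF0 a x y)
      (fun a x => (hα a).1 x) (fun a => (hα a).2) hTsum hAv
  have hA2 : ∀ (a : Bool) y, β (Bool.xor a c) y ≠ 0 →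
      ∀ x, sf ⟨n - 1, Nat.sub_lt hn Nat.one_pos⟩ x y = α a x := by
    intro a y hy x
    rw [← hslastE x y]
    rcases hA2' a y hy x with ⟨h1, h2⟩
    cases a
    · simp only [Bool.not_false] at h2
      rw [h1, h2]; ring
    · simp only [Bool.not_true] at h2
      rw [h1, h2]; ring
  -- Bob's perfect cheating analysis
  have hBv : ∑ a : Bool,
      fid (fun y => ∑ x, α a x * pf ⟨n - 1, Nat.sub_lt hn Nat.one_pos⟩ x y)
        (β (Bool.xor a c')) = 2 := by
    have h2 : bobObjQ A B hn α β c' pf = 1 := by rw [← hpval]; exact hc'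
    unfold bobObjQ at h2
    linarith
  have hq1 : ∀ a : Bool, ∑ y, ∑ x, α a x * pf ⟨n - 1, Nat.sub_lt hn Nat.one_pos⟩ x y = 1 := by
    intro a
    calc ∑ y, ∑ x, α a x * pf ⟨n - 1, Nat.sub_lt hn Nat.one_pos⟩ x y
        = ∑ x, ∑ y, α a x * pf ⟨n - 1, Nat.sub_lt hn Nat.one_pos⟩ x y := Finset.sum_comm
      _ = ∑ x, α a x * ∑ y, pf ⟨n - 1, Nat.sub_lt hn Nat.one_pos⟩ x y :=
          Finset.sum_congr rfl fun x _ => (Finset.mul_sum _ _ _).symm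
      _ = ∑ x, α a x := Finset.sum_congr rfl fun x _ => by rw [hBsum1 x, mul_one]
      _ = 1 := (hα a).2
  have hQ := bob_extract (fun a => β (Bool.xor a c'))
      (fun a y => ∑ x, α a x * pf ⟨n - 1, Nat.sub_lt hn Nat.one_pos⟩ x y)
      (fun a y => (hβ _).1 y) (fun a => (hβ _).2)
      (fun a y => Finset.sum_nonneg fun x _ => mul_nonneg ((hα a).1 x) (hp0 _ x y)) hq1 hBv
  -- step A : from β-marginal equality strictly below j, deduce α-marginal equality at j
  have stepA : ∀ j : Fin n,
      (∀ y : (i : Fin n) → B i,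
        ∑ y' ∈ univ.filter (fun y' => ∀ i, i < j → y' i = y i), β false y'
          = ∑ y' ∈ univ.filter (fun y' => ∀ i, i < j → y' i = y i), β true y') →
      ∀ x : (i : Fin n) → A i,
        ∑ x' ∈ univ.filter (fun x' => ∀ i, i ≤ j → x' i = x i), α false x'
          = ∑ x' ∈ univ.filter (fun x' => ∀ i, i ≤ j → x' i = x i), α true x' := by
    intro j hprev x
    have hprevγ : ∀ y : (i : Fin n) → B i,
        ∑ y' ∈ univ.filter (fun y' => ∀ i, i < j → y' i = y i), β (Bool.xor false c) y'
          = ∑ y' ∈ univ.filter (fun y' => ∀ i, i < j → y' i = y i), β (Bool.xor true c) y' := by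
      cases c
      · exact hprev
      · exact fun y => (hprev y).symm
    obtain ⟨y0, hy0⟩ : ∃ y0, β (Bool.xor false c) y0 ≠ 0 := by
      by_contra h
      push_neg at h
      have h1 := (hβ (Bool.xor false c)).2
      rw [Finset.sum_eq_zero (fun y _ => h y)] at h1
      norm_num at h1
    have hy0mem : y0 ∈ univ.filter (fun y' => ∀ i, i < j → y' i = y0 i) :=
      Finset.mem_filter.2 ⟨Finset.mem_univ _, fun i _ => rfl⟩
    have hpos : 0 < ∑ y' ∈ univ.filter (fun y' => ∀ i, i < j → y' i = y0 i),
        β (Bool.xor true c) y' := by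
      rw [← hprevγ y0]
      have hle := Finset.single_le_sum (f := fun y' => β (Bool.xor false c) y')
        (fun y _ => (hβ _).1 y) hy0mem
      have h0 : 0 < β (Bool.xor false c) y0 := ((hβ _).1 y0).lt_of_ne (Ne.symm hy0)
      linarith
    obtain ⟨y1, hy1mem, hy1⟩ :=
      Finset.exists_ne_zero_of_sum_ne_zero (ne_of_gt hpos)
    have hdepv : sf j x y0 = sf j x y1 := hsdep j x x y0 y1 (fun i _ => rfl)
      (fun i hi => ((Finset.mem_filter.1 hy1mem).2 i hi).symm)
    have hch0 := chain_eq hn (fun j x' => sf j x' y0) (fun j k h z => hsstep j k h z y0) j x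
    have hch1 := chain_eq hn (fun j x' => sf j x' y1) (fun j k h z => hsstep j k h z y1) j x
    calc ∑ x' ∈ univ.filter (fun x' => ∀ i, i ≤ j → x' i = x i), α false x'
        = ∑ x' ∈ univ.filter (fun x' => ∀ i, i ≤ j → x' i = x i),
            sf ⟨n - 1, Nat.sub_lt hn Nat.one_pos⟩ x' y0 :=
          Finset.sum_congr rfl fun x' _ => (hA2 false y0 hy0 x').symm
      _ = sf j x y0 := hch0.symm
      _ = sf j x y1 := hdepv
      _ = ∑ x' ∈ univ.filter (fun x' => ∀ i, i ≤ j → x' i = x i),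
            sf ⟨n - 1, Nat.sub_lt hn Nat.one_pos⟩ x' y1 := hch1
      _ = ∑ x' ∈ univ.filter (fun x' => ∀ i, i ≤ j → x' i = x i), α true x' :=
          Finset.sum_congr rfl fun x' _ => hA2 true y1 hy1 x'
  -- step B : from α-marginal equality at j, deduce β-marginal equality at j
  have stepB : ∀ j : Fin n,
      (∀ x : (i : Fin n) → A i,
        ∑ x' ∈ univ.filter (fun x' => ∀ i, i ≤ j → x' i = x i), α false x'
          = ∑ x' ∈ univ.filter (fun x' => ∀ i, i ≤ j → x' i = x i), α true x') →
      ∀ y : (i : Fin n) → B i,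
        ∑ y' ∈ univ.filter (fun y' => ∀ i, i ≤ j → y' i = y i), β false y'
          = ∑ y' ∈ univ.filter (fun y' => ∀ i, i ≤ j → y' i = y i), β true y' := by
    intro j hAe y
    have hqj : ∀ a : Bool,
        ∑ y' ∈ univ.filter (fun y' => ∀ i, i ≤ j → y' i = y i), β (Bool.xor a c') y'
          = ∑ x, α a x * pf j x y := by
      intro a
      calc ∑ y' ∈ univ.filter (fun y' => ∀ i, i ≤ j → y' i = y i), β (Bool.xor a c') y'
          = ∑ y' ∈ univ.filter (fun y' => ∀ i, i ≤ j → y' i = y i),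
              ∑ x, α a x * pf ⟨n - 1, Nat.sub_lt hn Nat.one_pos⟩ x y' :=
            Finset.sum_congr rfl fun y' _ => (hQ a y').symm
        _ = ∑ x, ∑ y' ∈ univ.filter (fun y' => ∀ i, i ≤ j → y' i = y i),
              α a x * pf ⟨n - 1, Nat.sub_lt hn Nat.one_pos⟩ x y' := Finset.sum_comm
        _ = ∑ x, α a x * ∑ y' ∈ univ.filter (fun y' => ∀ i, i ≤ j → y' i = y i),
              pf ⟨n - 1, Nat.sub_lt hn Nat.one_pos⟩ x y' :=
            Finset.sum_congr rfl fun x _ => (Finset.mul_sum _ _ _).symm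
        _ = ∑ x, α a x * pf j x y := Finset.sum_congr rfl fun x _ => by
              rw [← chain_eq hn (fun j y' => pf j x y') (fun j k h z => hpstep j k h x z) j y]
    have heq := sum_mul_congr j (α false) (α true) (fun x => pf j x y) hAe
      (fun x x' hxx => hpdep j x x' y y hxx (fun i _ => rfl))
    have h2 : ∑ y' ∈ univ.filter (fun y' => ∀ i, i ≤ j → y' i = y i), β (Bool.xor false c') y'
        = ∑ y' ∈ univ.filter (fun y' => ∀ i, i ≤ j → y' i = y i), β (Bool.xor true c') y' := by
      rw [hqj false, hqj true]; exact heq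
    cases c'
    · exact h2
    · exact h2.symm
  -- the round-by-round induction
  have key : ∀ m, ∀ j : Fin n, (j : ℕ) = m →
      ∀ y : (i : Fin n) → B i,
        ∑ y' ∈ univ.filter (fun y' => ∀ i, i ≤ j → y' i = y i), β false y'
          = ∑ y' ∈ univ.filter (fun y' => ∀ i, i ≤ j → y' i = y i), β true y' := by
    intro m
    induction m with
    | zero =>
      intro j hj
      have hprev : ∀ y : (i : Fin n) → B i,
          ∑ y' ∈ univ.filter (fun y' => ∀ i, i < j → y' i = y i), β false y'
            = ∑ y' ∈ univ.filter (fun y' => ∀ i, i < j → y' i = y i), β true y' := by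
        intro y
        have hu : univ.filter (fun y' : (i : Fin n) → B i => ∀ i, i < j → y' i = y i)
            = univ := by
          ext y'
          simp only [Finset.mem_filter, Finset.mem_univ, true_and, iff_true]
          intro i hi
          rw [Fin.lt_def, hj] at hi
          exact absurd hi (Nat.not_lt_zero _)
        rw [hu, (hβ false).2, (hβ true).2]
      exact stepB j (stepA j hprev)
    | succ m ih =>
      intro j hj
      have hm : m < n := by have := j.isLt; omega
      have hk := ih ⟨m, hm⟩ rfl
      have hprev : ∀ y : (i : Fin n) → B i,
          ∑ y' ∈ univ.filter (fun y' => ∀ i, i < j → y' i = y i), β false y'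
            = ∑ y' ∈ univ.filter (fun y' => ∀ i, i < j → y' i = y i), β true y' := by
        intro y
        have hfe : univ.filter (fun y' : (i : Fin n) → B i => ∀ i, i < j → y' i = y i)
            = univ.filter (fun y' => ∀ i, i ≤ (⟨m, hm⟩ : Fin n) → y' i = y i) := by
          ext y'
          simp only [Finset.mem_filter, Finset.mem_univ, true_and]
          constructor
          · intro h i hi
            refine h i ?_
            rw [Fin.lt_def, hj]
            have h2 : (i : ℕ) ≤ m := hi
            omega
          · intro h i hi
            refine h i ?_
            rw [Fin.lt_def, hj] at hi
            show (i : ℕ) ≤ m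
            omega
        rw [hfe]
        exact hk y
      exact stepB j (stepA j hprev)
  -- conclude β false = β true, contradicting disjointness of supports
  have hβeq : ∀ y, β false y = β true y := by
    intro y
    have hlast := key (n - 1) ⟨n - 1, Nat.sub_lt hn Nat.one_pos⟩ rfl y
    rwa [filter_last_eq hn y, Finset.sum_singleton, Finset.sum_singleton] at hlast
  obtain ⟨y0, hy0⟩ : ∃ y0, β false y0 ≠ 0 := by
    by_contra h
    push_neg at h
    have h1 := (hβ false).2
    rw [Finset.sum_eq_zero (fun y _ => h y)] at h1
    norm_num at h1
  have hzero : β false y0 = 0 := by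
    cases c <;> rcases hdisj y0 with h | h
    · exact h
    · rw [hβeq y0]; exact h
    · rw [hβeq y0]; exact h
    · exact h
  exact hy0 hzero

end BCCF
end
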